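/- arXiv:math/0609713 — 10 statements merged into one kernel-verified Lean document; each statement's English description precedes it below -/
import Mathlib

section
/- Let p(x) = x_1^{d-1}·(x_1+...+x_n) - x_1^{d-1} + 1 for d ≥ 2. Then p is identically equal to 1 on the hyperplane H = {x ∈ ℝ^n : x_1 + ... + x_n = 1}, and p has degree d. -/
open MvPolynomial

theorem stmt_0 (n d : ℕ) (hn : 1 ≤ n) (hd : 2 ≤ d)
    (p : MvPolynomial (Fin n) ℝ)
    (hp : p = X (⟨0, hn⟩ : Fin n) ^ (d - 1) * (∑ i, X i) -
      X (⟨0, hn⟩ : Fin n) ^ (d - 1) + 1) :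
    (∀ x : Fin n → ℝ, ∑ i, x i = 1 → eval x p = 1) ∧ p.totalDegree = d := by
  set i0 : Fin n := ⟨0, hn⟩
  constructor
  · intro x hx
    simp [hp, hx]
  · have hd1 : d - 1 + 1 = d := by omega
    have hub : p.totalDegree ≤ d := by
      rw [hp]
      refine le_trans (totalDegree_add _ _) ?_
      simp only [totalDegree_one]
      refine max_le (le_trans (totalDegree_sub _ _) ?_) (by omega)
      refine max_le ?_ ?_
      · refine le_trans (totalDegree_mul _ _) ?_
        have h1 : (X i0 ^ (d-1) : MvPolynomial (Fin n) ℝ).totalDegree ≤ d - 1 := by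
          simpa using totalDegree_pow (X i0 : MvPolynomial (Fin n) ℝ) (d-1)
        have h2 : (∑ i, X i : MvPolynomial (Fin n) ℝ).totalDegree ≤ 1 := by
          refine le_trans (totalDegree_finset_sum _ _) ?_
          exact Finset.sup_le fun i _ => le_of_eq (totalDegree_X i)
        omega
      · calc (X i0 ^ (d-1) : MvPolynomial (Fin n) ℝ).totalDegree ≤ d - 1 := by
              simpa using totalDegree_pow (X i0 : MvPolynomial (Fin n) ℝ) (d-1)
          _ ≤ d := by omega
    have hlb : d ≤ p.totalDegree := by
      have hcoeff : coeff (Finsupp.single i0 d) p = 1 := by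
        rw [hp, Finset.mul_sum, coeff_add, coeff_sub, coeff_sum]
        have hXpow : (X i0 ^ (d-1) : MvPolynomial (Fin n) ℝ) =
            monomial (Finsupp.single i0 (d-1)) 1 := by
          rw [X_pow_eq_monomial]
        have hterm : ∀ i : Fin n, coeff (Finsupp.single i0 d)
            ((X i0 ^ (d-1) : MvPolynomial (Fin n) ℝ) * X i) =
            if i = i0 then 1 else 0 := by
          intro i
          rw [hXpow, X, monomial_mul, coeff_monomial]
          by_cases h : i = i0
          · subst h
            rw [if_pos rfl, if_pos]
            · simp
            · rw [← Finsupp.single_add, hd1]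
          · rw [if_neg h, if_neg]
            intro he
            have := DFunLike.congr_fun he i
            simp [Finsupp.single_apply, h, Ne.symm h] at this
        have hsum : (∑ i : Fin n, coeff (Finsupp.single i0 d)
            ((X i0 ^ (d-1) : MvPolynomial (Fin n) ℝ) * X i)) = 1 := by
          simp only [hterm]
          rw [Finset.sum_ite_eq' Finset.univ i0 (fun _ => (1:ℝ))]
          simp
        have h2 : coeff (Finsupp.single i0 d)
            (X i0 ^ (d-1) : MvPolynomial (Fin n) ℝ) = 0 := by
          rw [hXpow, coeff_monomial, if_neg]
          intro he
          have := DFunLike.congr_fun he i0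
          simp [Finsupp.single_apply] at this
          omega
        have h3 : coeff (Finsupp.single i0 d) (1 : MvPolynomial (Fin n) ℝ) = 0 := by
          rw [coeff_one, if_neg]
          intro he
          have := DFunLike.congr_fun he i0
          simp [Finsupp.single_apply] at this
          omega
        rw [hsum, h2, h3]
        ring
      have h := le_totalDegree (p := p)
        (s := Finsupp.single i0 d) (mem_support_iff.mpr (by rw [hcoeff]; norm_num))
      simpa using h
    omega
end

section
/- Let g_0, ..., g_d be a Whitney chain: g_0 = 1, each g_j has degree j, each g_j has nonnegative coefficients and equals 1 on the hyperplane {x : x_1+...+x_n = 1}, and g_j = g_{j-1} - u_j + s·u_j for some polynomial u_j with 0 ≤ u_j ≤ g_{j-1} coefficientwise (u_j ≠ 0 of degree j-1 in the top part producing degree j). Then the number of distinct monomials of g_d = p satisfies N(p) ≥ d(n-1) + 1. -/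
open MvPolynomial

namespace Stmt2Aux

noncomputable def S (n : ℕ) : MvPolynomial (Fin n) ℝ := ∑ i, X i

lemma degree_sum_eq {n : ℕ} (m : Fin n →₀ ℕ) : (m.sum fun _ e => e) = m.degree := rfl

lemma sum_support_eq_degree {n : ℕ} (m : Fin n →₀ ℕ) :
    (∑ i ∈ m.support, m i) = m.degree := rfl

lemma finsupp_degree_add {n : ℕ} (a b : Fin n →₀ ℕ) :
    (a + b).degree = a.degree + b.degree := by
  simp only [Finsupp.degree_eq_weight_one, map_add]

lemma finsupp_degree_single {n : ℕ} (i : Fin n) :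
    (Finsupp.single i 1).degree = 1 := by
  exact Finsupp.degree_single i 1

lemma coeff_S_mul {n : ℕ} (v : MvPolynomial (Fin n) ℝ) (m : Fin n →₀ ℕ) :
    coeff m (S n * v)
      = ∑ i, if i ∈ m.support then coeff (m - Finsupp.single i 1) v else 0 := by
  classical
  rw [S, Finset.sum_mul, coeff_sum]
  exact Finset.sum_congr rfl fun i _ => by rw [mul_comm, coeff_mul_X']

lemma coeff_S_mul_nonneg {n : ℕ} {v : MvPolynomial (Fin n) ℝ}
    (hv : ∀ m, 0 ≤ coeff m v) (m : Fin n →₀ ℕ) : 0 ≤ coeff m (S n * v) := by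
  rw [coeff_S_mul]
  refine Finset.sum_nonneg fun i _ => ?_
  split <;> simp [hv]

lemma add_single_mem_support {n : ℕ} {v : MvPolynomial (Fin n) ℝ}
    (hv : ∀ m, 0 ≤ coeff m v) {m : Fin n →₀ ℕ} (hm : m ∈ v.support) (i : Fin n) :
    m + Finsupp.single i 1 ∈ (S n * v).support := by
  classical
  rw [mem_support_iff] at hm ⊢
  have hpos : 0 < coeff m v := lt_of_le_of_ne (hv m) (Ne.symm hm)
  rw [coeff_S_mul]
  have hmem : i ∈ (m + Finsupp.single i 1).support := by
    simp [Finsupp.mem_support_iff]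
  have hsub : m + Finsupp.single i 1 - Finsupp.single i 1 = m := by
    ext j
    by_cases h : j = i <;> simp [Finsupp.single_apply, h]
  refine ne_of_gt (Finset.sum_pos' (fun j _ => ?_) ⟨i, Finset.mem_univ i, ?_⟩)
  · split <;> simp [hv]
  · rw [if_pos hmem, hsub]; exact hpos

lemma shift_card {n : ℕ} (hn : 0 < n) {v : MvPolynomial (Fin n) ℝ} (hv0 : v ≠ 0)
    (hv : ∀ m, 0 ≤ coeff m v) :
    v.support.card + (n - 1) ≤ (S n * v).support.card := by
  classical
  set i0 : Fin n := ⟨0, hn⟩ with hi0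
  obtain ⟨ms, hms, hmin⟩ := v.support.exists_min_image (fun m => m i0)
    (by rwa [support_nonempty])
  set A : Finset (Fin n →₀ ℕ) := v.support.image (fun m => m + Finsupp.single i0 1) with hA
  set B : Finset (Fin n →₀ ℕ) :=
    (Finset.univ.erase i0).image (fun i : Fin n => ms + Finsupp.single i 1) with hB
  have hAsub : A ⊆ (S n * v).support := by
    intro x hx
    rw [hA, Finset.mem_image] at hx
    obtain ⟨m, hm, rfl⟩ := hx
    exact add_single_mem_support hv hm i0
  have hBsub : B ⊆ (S n * v).support := by
    intro x hx
    rw [hB, Finset.mem_image] at hx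
    obtain ⟨i, _, rfl⟩ := hx
    exact add_single_mem_support hv hms i
  have hdisj : Disjoint A B := by
    rw [Finset.disjoint_left]
    intro x hxA hxB
    rw [hA, Finset.mem_image] at hxA
    rw [hB, Finset.mem_image] at hxB
    obtain ⟨m, hm, hm'⟩ := hxA
    obtain ⟨i, hi, hi'⟩ := hxB
    have hine : i ≠ i0 := Finset.ne_of_mem_erase hi
    have heq : m + Finsupp.single i0 1 = ms + Finsupp.single i 1 := by rw [hm', hi']
    have hval := DFunLike.congr_fun heq i0
    simp only [Finsupp.add_apply, Finsupp.single_apply] at hval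
    rw [if_pos trivial, if_neg hine] at hval
    have hle := hmin m hm
    omega
  have hcardA : A.card = v.support.card := by
    rw [hA]
    exact Finset.card_image_of_injective _ (add_left_injective _)
  have hcardB : B.card = n - 1 := by
    rw [hB, Finset.card_image_of_injective, Finset.card_erase_of_mem (Finset.mem_univ _),
      Finset.card_univ, Fintype.card_fin]
    intro i j hij
    exact Finsupp.single_left_injective one_ne_zero (add_left_cancel hij)
  calc v.support.card + (n - 1) = A.card + B.card := by rw [hcardA, hcardB]
    _ = (A ∪ B).card := (Finset.card_union_of_disjoint hdisj).symm
    _ ≤ (S n * v).support.card := Finset.card_le_card (Finset.union_subset hAsub hBsub)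

lemma g_ne_zero {n : ℕ} (hn : 0 < n) (U : MvPolynomial (Fin n) ℝ) :
    (1 - U + S n * U) ≠ 0 := by
  intro h
  have h1 : eval (Pi.single (⟨0, hn⟩ : Fin n) (1 : ℝ)) (1 - U + S n * U) = 0 := by
    rw [h]; simp
  have h2 : eval (Pi.single (⟨0, hn⟩ : Fin n) (1 : ℝ)) (S n) = 1 := by
    simp [S, Finset.sum_pi_single']
  simp only [map_add, map_sub, map_one, map_mul, h2, one_mul] at h1
  have : (1 : ℝ) = 0 := by linarith
  exact one_ne_zero this

lemma totalDegree_S_mul_le {n : ℕ} (U : MvPolynomial (Fin n) ℝ) :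
    (S n * U).totalDegree ≤ U.totalDegree + 1 := by
  refine le_trans (totalDegree_mul _ _) ?_
  have : (S n).totalDegree ≤ 1 := by
    rw [S]
    refine le_trans (totalDegree_finset_sum _ _) ?_
    refine Finset.sup_le fun i _ => ?_
    rw [totalDegree_X]
  omega

/-- Main induction. -/
lemma main {n : ℕ} (hn : 0 < n) (d : ℕ) :
    ∀ (U g : MvPolynomial (Fin n) ℝ), (∀ m, 0 ≤ coeff m U) →
    g = 1 - U + S n * U →
    (∀ m, 0 ≤ coeff m g) →
    g.totalDegree ≤ d →
    g.totalDegree * (n - 1) + 1 ≤ g.support.card := by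
  classical
  induction d with
  | zero =>
    intro U g hU hgU hg hdeg
    have h0 : g.totalDegree = 0 := Nat.le_zero.mp hdeg
    rw [h0]
    have hne : g ≠ 0 := by rw [hgU]; exact g_ne_zero hn U
    simpa using Finset.card_pos.mpr ((support_nonempty).mpr hne)
  | succ d ih =>
    intro U g hU hgU hg hdeg
    by_cases hle : g.totalDegree ≤ d
    · exact ih U g hU hgU hg hle
    have hD : g.totalDegree = d + 1 := le_antisymm hdeg (not_le.mp hle)
    -- U ≠ 0
    have hUne : U ≠ 0 := by
      intro h
      rw [h, mul_zero, sub_zero, add_zero] at hgU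
      rw [hgU, totalDegree_one] at hD
      omega
    -- degree of U is at most d
    have hUled : U.totalDegree ≤ d := by
      obtain ⟨m, hm, hmdeg⟩ := Finset.exists_mem_eq_sup U.support
        ((support_nonempty).mpr hUne) (fun s => s.sum fun _ e => e)
      have hmdeg' : U.totalDegree = m.degree := hmdeg
      by_contra hlt
      push_neg at hlt
      have hmem := add_single_mem_support hU hm (⟨0, hn⟩ : Fin n)
      have hdegm : (m + Finsupp.single (⟨0, hn⟩ : Fin n) 1).degree
          = U.totalDegree + 1 := by
        rw [finsupp_degree_add, finsupp_degree_single, hmdeg']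
      have hcoeff1 : coeff (m + Finsupp.single (⟨0, hn⟩ : Fin n) 1)
          (1 : MvPolynomial (Fin n) ℝ) = 0 := by
        rw [coeff_one, if_neg]
        intro h
        have := congrArg Finsupp.degree h
        rw [map_zero, hdegm] at this
        omega
      have hcoeffU : coeff (m + Finsupp.single (⟨0, hn⟩ : Fin n) 1) U = 0 := by
        apply coeff_eq_zero_of_totalDegree_lt
        rw [sum_support_eq_degree, hdegm]
        omega
      have hgm : (m + Finsupp.single (⟨0, hn⟩ : Fin n) 1) ∈ g.support := by
        rw [mem_support_iff, hgU, coeff_add, coeff_sub, hcoeff1, hcoeffU]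
        simpa using (mem_support_iff.mp hmem)
      have hfin := le_totalDegree hgm
      rw [degree_sum_eq, hdegm, hD] at hfin
      omega
    -- degree of U is at least d
    have hUged : d ≤ U.totalDegree := by
      by_contra hlt
      push_neg at hlt
      have h1 : g.totalDegree ≤ U.totalDegree + 1 := by
        rw [hgU]
        refine le_trans (totalDegree_add _ _) ?_
        have h2 : (1 - U : MvPolynomial (Fin n) ℝ).totalDegree ≤ U.totalDegree := by
          rw [sub_eq_add_neg]
          refine le_trans (totalDegree_add _ _) ?_
          simp [totalDegree_neg, totalDegree_one]
        exact max_le (le_trans h2 (by omega)) (totalDegree_S_mul_le U)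
      omega
    have hUdeg : U.totalDegree = d := le_antisymm hUled hUged
    -- top homogeneous component
    set Ue : MvPolynomial (Fin n) ℝ := homogeneousComponent d U with hUedef
    have hUecoeff : ∀ m, coeff m Ue = if m.degree = d then coeff m U else 0 :=
      fun m => coeff_homogeneousComponent d U m
    have hUe_nonneg : ∀ m, 0 ≤ coeff m Ue := by
      intro m; rw [hUecoeff]; split <;> simp [hU]
    have hUe_ne : Ue ≠ 0 := by
      obtain ⟨m, hm, hmdeg⟩ := Finset.exists_mem_eq_sup U.support
        ((support_nonempty).mpr hUne) (fun s => s.sum fun _ e => e)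
      have hmdeg' : m.degree = d := by
        have : U.totalDegree = m.degree := hmdeg
        omega
      have hcne : coeff m Ue ≠ 0 := by
        rw [hUecoeff, if_pos hmdeg']
        exact mem_support_iff.mp hm
      exact fun h => hcne (by rw [h, coeff_zero])
    have hS_hom : (S n).IsHomogeneous 1 := by
      rw [S]
      exact IsHomogeneous.sum _ _ _ (fun i _ => isHomogeneous_X _ i)
    have hUe_hom : Ue.IsHomogeneous d := homogeneousComponent_isHomogeneous d U
    have htop_hom : (S n * Ue).IsHomogeneous (d + 1) := by
      rw [add_comm]
      exact hS_hom.mul hUe_hom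
    -- coefficients at top degree agree
    have htop : ∀ m : Fin n →₀ ℕ, m.degree = d + 1 → coeff m g = coeff m (S n * Ue) := by
      intro m hm
      have hc1 : coeff m (1 : MvPolynomial (Fin n) ℝ) = 0 := by
        rw [coeff_one, if_neg]
        intro h
        have := congrArg Finsupp.degree h
        rw [map_zero, hm] at this
        omega
      have hcU : coeff m U = 0 := by
        apply coeff_eq_zero_of_totalDegree_lt
        rw [sum_support_eq_degree, hm, hUdeg]
        omega
      have hterm : ∀ i ∈ (Finset.univ : Finset (Fin n)),
          (if i ∈ m.support then coeff (m - Finsupp.single i 1) U else 0)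
          = (if i ∈ m.support then coeff (m - Finsupp.single i 1) Ue else 0) := by
        intro i _
        by_cases hi : i ∈ m.support
        · rw [if_pos hi, if_pos hi]
          have hle : Finsupp.single i 1 ≤ m := by
            rw [Finsupp.single_le_iff]
            exact Nat.one_le_iff_ne_zero.mpr (Finsupp.mem_support_iff.mp hi)
          have h2 : (m - Finsupp.single i 1) + Finsupp.single i 1 = m :=
            tsub_add_cancel_of_le hle
          have h3 := congrArg Finsupp.degree h2
          rw [finsupp_degree_add, finsupp_degree_single, hm] at h3
          rw [hUecoeff, if_pos (by omega)]
        · rw [if_neg hi, if_neg hi]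
      rw [hgU, coeff_add, coeff_sub, hc1, hcU, coeff_S_mul, coeff_S_mul,
        Finset.sum_congr rfl hterm]
      ring
    -- low part
    set glow : MvPolynomial (Fin n) ℝ := g - S n * Ue with hglowdef
    have hglow_coeff : ∀ m, coeff m glow =
        if m.degree = d + 1 then 0 else coeff m g := by
      intro m
      rw [hglowdef, coeff_sub]
      by_cases hm : m.degree = d + 1
      · rw [if_pos hm, htop m hm]; ring
      · rw [if_neg hm, htop_hom.coeff_eq_zero hm, sub_zero]
    have hglow_sub : glow.support ⊆ g.support := by
      intro m hm
      rw [mem_support_iff, hglow_coeff] at hm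
      rw [mem_support_iff]
      by_cases h : m.degree = d + 1
      · rw [if_pos h] at hm; exact absurd rfl hm
      · rwa [if_neg h] at hm
    have htop_sub : (S n * Ue).support ⊆ g.support := by
      intro m hm
      rw [mem_support_iff] at hm ⊢
      have hdm : m.degree = d + 1 := by
        by_contra h
        exact hm (htop_hom.coeff_eq_zero h)
      rw [htop m hdm]
      exact hm
    have hdisj : Disjoint glow.support (S n * Ue).support := by
      rw [Finset.disjoint_left]
      intro m hm1 hm2
      rw [mem_support_iff, hglow_coeff] at hm1
      rw [mem_support_iff] at hm2
      have hdm : m.degree = d + 1 := by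
        by_contra h
        exact hm2 (htop_hom.coeff_eq_zero h)
      rw [if_pos hdm] at hm1
      exact hm1 rfl
    have hcard : glow.support.card + (S n * Ue).support.card ≤ g.support.card := by
      rw [← Finset.card_union_of_disjoint hdisj]
      exact Finset.card_le_card (Finset.union_subset hglow_sub htop_sub)
    -- the reduced polynomial
    set U' : MvPolynomial (Fin n) ℝ := U - Ue with hU'def
    set g' : MvPolynomial (Fin n) ℝ := 1 - U' + S n * U' with hg'def
    have hg'eq : g' = glow + Ue := by
      rw [hg'def, hglowdef, hgU, hU'def]; ring
    have hU'_nonneg : ∀ m, 0 ≤ coeff m U' := by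
      intro m
      rw [hU'def, coeff_sub, hUecoeff]
      split
      · simp
      · simp [hU]
    have hg'_nonneg : ∀ m, 0 ≤ coeff m g' := by
      intro m
      rw [hg'eq, coeff_add, hglow_coeff]
      have := hUe_nonneg m
      split
      · simpa using this
      · exact add_nonneg (hg m) this
    have hg'_deg_le : g'.totalDegree ≤ d := by
      refine Finset.sup_le ?_
      intro m hm
      rw [degree_sum_eq]
      by_contra hgt
      push_neg at hgt
      rw [mem_support_iff, hg'eq, coeff_add, hglow_coeff] at hm
      have hUe0 : coeff m Ue = 0 := hUe_hom.coeff_eq_zero (by omega)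
      by_cases h : m.degree = d + 1
      · rw [if_pos h, hUe0] at hm; simp at hm
      · have hg0 : coeff m g = 0 := by
          apply coeff_eq_zero_of_totalDegree_lt
          rw [sum_support_eq_degree, hD]
          omega
        rw [if_neg h, hg0, hUe0] at hm; simp at hm
    have hg'_deg_ge : d ≤ g'.totalDegree := by
      obtain ⟨m, hm⟩ := (support_nonempty).mpr hUe_ne
      have hdm : m.degree = d := by
        by_contra h
        exact (mem_support_iff.mp hm) (hUe_hom.coeff_eq_zero h)
      have hpos : 0 < coeff m Ue :=
        lt_of_le_of_ne (hUe_nonneg m) (Ne.symm (mem_support_iff.mp hm))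
      have hglow_nonneg : 0 ≤ coeff m glow := by
        rw [hglow_coeff]
        split
        · exact le_refl 0
        · exact hg m
      have hmem : m ∈ g'.support := by
        rw [mem_support_iff, hg'eq, coeff_add]
        positivity
      have := le_totalDegree hmem
      rw [degree_sum_eq, hdm] at this
      exact this
    have hg'_deg : g'.totalDegree = d := le_antisymm hg'_deg_le hg'_deg_ge
    -- induction hypothesis
    have hIH := ih U' g' hU'_nonneg hg'def hg'_nonneg hg'_deg_le
    rw [hg'_deg] at hIH
    -- support of g' is contained in supports of glow and Ue
    have hNle : g'.support.card ≤ glow.support.card + Ue.support.card := by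
      refine le_trans (Finset.card_le_card ?_) (Finset.card_union_le _ _)
      intro m hm
      rw [mem_support_iff, hg'eq, coeff_add] at hm
      rw [Finset.mem_union, mem_support_iff, mem_support_iff]
      by_contra h
      push_neg at h
      rw [h.1, h.2, add_zero] at hm
      exact hm rfl
    have hshift := shift_card hn hUe_ne hUe_nonneg
    rw [hD]
    have hmul : (d + 1) * (n - 1) = d * (n - 1) + (n - 1) := by ring
    omega

end Stmt2Aux

open Stmt2Aux
theorem stmt_2 (n d : ℕ) (g : ℕ → MvPolynomial (Fin n) ℝ)
    (u : ℕ → MvPolynomial (Fin n) ℝ)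
    (hg0 : g 0 = 1)
    (hdeg : ∀ j, j ≤ d → (g j).totalDegree = j)
    (hnonneg : ∀ j, j ≤ d → ∀ m, 0 ≤ coeff m (g j))
    (hone : ∀ j, j ≤ d → ∀ x : Fin n → ℝ, ∑ i, x i = 1 → eval x (g j) = 1)
    (hstep : ∀ j, 1 ≤ j → j ≤ d →
      g j = g (j - 1) - u j + (∑ i, X i) * u j)
    (hu : ∀ j, 1 ≤ j → j ≤ d →
      (∀ m, 0 ≤ coeff m (u j)) ∧ (∀ m, 0 ≤ coeff m (g (j - 1) - u j))) :
    d * (n - 1) + 1 ≤ (g d).support.card := by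
  classical
  rcases Nat.eq_zero_or_pos n with hn | hn
  · -- n = 0 : degrees are all zero, forcing d = 0
    subst hn
    rcases Nat.eq_zero_or_pos d with hd | hd
    · subst hd
      rw [hg0]
      have : (1 : MvPolynomial (Fin 0) ℝ) ≠ 0 := one_ne_zero
      simp only [Nat.zero_mul, Nat.zero_add]
      exact Finset.card_pos.mpr ((support_nonempty).mpr this)
    · exfalso
      have h1 := hdeg d le_rfl
      have h2 : (g d).totalDegree = 0 := by
        refine Nat.le_zero.mp (Finset.sup_le ?_)
        intro m _
        have hm0 : m = 0 := Subsingleton.elim m 0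
        simp [hm0]
      omega
  · -- n ≥ 1 : telescope and apply the main lemma
    have key : ∀ k, k ≤ d →
        g k = 1 - (∑ j ∈ Finset.Icc 1 k, u j) + S n * (∑ j ∈ Finset.Icc 1 k, u j) := by
      intro k
      induction k with
      | zero =>
        intro _
        simp [hg0]
      | succ k ihk =>
        intro hk
        have hk' : k ≤ d := Nat.le_of_succ_le hk
        have hs := hstep (k + 1) (by omega) hk
        simp only [Nat.add_sub_cancel] at hs
        rw [hs, ihk hk', Finset.sum_Icc_succ_top (by omega : 1 ≤ k + 1), S]
        ring
    set U : MvPolynomial (Fin n) ℝ := ∑ j ∈ Finset.Icc 1 d, u j with hUdef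
    have hU_nonneg : ∀ m, 0 ≤ coeff m U := by
      intro m
      rw [hUdef, coeff_sum]
      refine Finset.sum_nonneg fun j hj => ?_
      rw [Finset.mem_Icc] at hj
      exact (hu j hj.1 hj.2).1 m
    have hgd : g d = 1 - U + S n * U := key d le_rfl
    have hdd := hdeg d le_rfl
    have := main hn d U (g d) hU_nonneg hgd (hnonneg d le_rfl) (by omega)
    rw [hdd] at this
    have hS : S n = ∑ i, (X i : MvPolynomial (Fin n) ℝ) := rfl
    exact this
end

section
/- Let f ∈ ℝ[x_1,...,x_n] be a nonzero polynomial and let s = x_1 + ... + x_n. Then the product s·f has at least n distinct monomials with nonzero coefficient. -/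
open MvPolynomial

theorem stmt_6 (n : ℕ) (f : MvPolynomial (Fin n) ℝ) (hf : f ≠ 0) :
    n ≤ ((∑ i, X i) * f).support.card := by
  classical
  set D : Fin n → ℕ := fun i => f.support.sup (fun m => m i) with hD
  have hsupp : f.support.Nonempty := support_nonempty.mpr hf
  have hle : ∀ i : Fin n, ∀ t ∈ f.support, t i ≤ D i := fun i t ht =>
    Finset.le_sup (f := fun m => m i) ht
  have hm : ∀ i : Fin n, ∃ m ∈ f.support, m i = D i := by
    intro i
    obtain ⟨m, hmem, hmi⟩ := Finset.exists_mem_eq_sup f.support hsupp (fun m => m i)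
    exact ⟨m, hmem, hmi.symm⟩
  choose m hmem hmD using hm
  set g : Fin n → (Fin n →₀ ℕ) := fun i => m i + Finsupp.single i 1 with hg
  have key : ∀ i, coeff (g i) ((∑ j, X j) * f) = coeff (m i) f := by
    intro i
    rw [Finset.sum_mul, coeff_sum]
    rw [Finset.sum_eq_single i]
    · rw [hg]
      simp only [g]
      rw [add_comm (m i)]
      exact coeff_X_mul _ _ _
    · intro j _ hji
      rw [coeff_X_mul']
      split_ifs with h
      · apply MvPolynomial.notMem_support_iff.mp
        intro hc
        have h1 : ((g i - Finsupp.single j 1 : Fin n →₀ ℕ)) i ≤ D i := hle i _ hc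
        have h2 : ((g i - Finsupp.single j 1 : Fin n →₀ ℕ)) i = D i + 1 := by
          simp [g, Finsupp.single_apply, hji, hmD i, Finsupp.sub_apply]
        omega
      · rfl
    · intro h
      exact absurd (Finset.mem_univ i) h
  have hginj : Function.Injective g := by
    intro i j hij
    by_contra hne
    have h1 : g i i = D i + 1 := by simp [g, Finsupp.single_apply, hmD i]
    have h2 : g j i ≤ D i := by
      have := hle i (m j) (hmem j)
      simp [g, Finsupp.single_apply, Ne.symm hne]
      omega
    rw [hij] at h1
    omega
  have hmemg : ∀ i, g i ∈ ((∑ j, X j) * f).support := by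
    intro i
    rw [MvPolynomial.mem_support_iff, key i]
    exact MvPolynomial.mem_support_iff.mp (hmem i)
  calc n = (Finset.univ : Finset (Fin n)).card := by simp
    _ ≤ _ := Finset.card_le_card_of_injOn g (fun i _ => hmemg i) (hginj.injOn)
end

section
/- If p ∈ ℝ[x_1,...,x_n] has degree d > 0 and p = 1 on the hyperplane {x : x_1+...+x_n = 1}, then p has at least n distinct monomials of degree exactly d. -/
open MvPolynomial

/-- Part A: if `p = 1` on the hyperplane `∑ x = 1`, then `p - 1` is divisible by
`(∑ X i) - 1`. -/
lemma partA_aux (m : ℕ) (p : MvPolynomial (Fin (m + 1)) ℝ)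
    (hone : ∀ x : Fin (m + 1) → ℝ, ∑ i, x i = 1 → eval x p = 1) :
    ∃ r, p - 1 = ((∑ i, X i) - 1) * r := by
  set c : MvPolynomial (Fin m) ℝ := 1 - ∑ i, X i with hc
  set P := finSuccEquiv ℝ m (p - 1) with hP
  have hroot : P.eval c = 0 := by
    apply MvPolynomial.funext
    intro z
    have h1 : eval z (P.eval c) = Polynomial.eval (eval z c) (P.map (eval z)) := by
      rw [Polynomial.eval, Polynomial.hom_eval₂, RingHom.comp_id, Polynomial.eval₂_eq_eval_map]
    have h2 : Polynomial.eval (eval z c) (P.map (eval z))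
        = eval (Fin.cons (eval z c) z) (p - 1) := by
      rw [hP, ← eval_eq_eval_mv_eval']
    have hzc : eval z c = 1 - ∑ i, z i := by
      simp [hc]
    have hsum : ∑ i, (Fin.cons (eval z c) z : Fin (m + 1) → ℝ) i = 1 := by
      rw [Fin.sum_univ_succ]
      simp [hzc]
    rw [h1, h2, map_sub, hone _ hsum]
    simp
  have hdvd : Polynomial.X - Polynomial.C c ∣ P := Polynomial.dvd_iff_isRoot.mpr hroot
  obtain ⟨Q, hQ⟩ := hdvd
  refine ⟨(finSuccEquiv ℝ m).symm Q, ?_⟩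
  apply (finSuccEquiv ℝ m).injective
  have hs : finSuccEquiv ℝ m ((∑ i : Fin (m + 1), X i) - 1)
      = Polynomial.X - Polynomial.C c := by
    rw [map_sub, map_one, map_sum, Fin.sum_univ_succ]
    simp only [finSuccEquiv_X_zero, finSuccEquiv_X_succ]
    rw [hc, map_sub, map_one, map_sum]
    ring
  rw [map_mul, hs, AlgEquiv.apply_symm_apply, ← hQ, hP]

/-- Part B: multiplying a nonzero polynomial by `∑ X i` gives at least `n` monomials. -/
lemma partB_aux (n : ℕ) (h : MvPolynomial (Fin n) ℝ) (hh : h ≠ 0) :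
    n ≤ ((∑ i, X i) * h).support.card := by
  have hs : h.support.Nonempty :=
    Finset.nonempty_iff_ne_empty.mpr (fun he => hh (support_eq_empty.mp he))
  choose F hF1 hF2 using fun i : Fin n => h.support.exists_max_image (fun m => m i) hs
  set G : Fin n → (Fin n →₀ ℕ) := fun i => F i + Finsupp.single i 1 with hG
  have hkey : ∀ i, G i ∈ ((∑ j, X j) * h).support := by
    intro i
    rw [mem_support_iff, Finset.sum_mul, coeff_sum]
    have : ∀ j : Fin n, j ≠ i →
        coeff (G i) ((X j : MvPolynomial (Fin n) ℝ) * h) = 0 := by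
      intro j hji
      rw [coeff_X_mul']
      split_ifs with hmem
      · by_contra hne
        have hmem2 : (G i - Finsupp.single j 1) ∈ h.support := mem_support_iff.mpr hne
        have hle := hF2 i _ hmem2
        have heq : (G i - Finsupp.single j 1 : Fin n →₀ ℕ) i = F i i + 1 := by
          simp [hG, Finsupp.sub_apply, Finsupp.add_apply, Finsupp.single_apply, hji.symm, hji]
        rw [heq] at hle
        omega
      · rfl
    rw [Finset.sum_eq_single i (fun j _ hji => this j hji) (by simp)]
    have hmemi : i ∈ (G i).support := by
      simp [hG, Finsupp.add_apply, Finsupp.single_apply]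
    rw [coeff_X_mul', if_pos hmemi]
    have : G i - Finsupp.single i 1 = F i := by
      simp [hG]
    rw [this]
    exact mem_support_iff.mp (hF1 i)
  have hinj : Set.InjOn G (Finset.univ : Finset (Fin n)) := by
    intro i _ j _ hij
    by_contra hne
    have h1 : G i i = F i i + 1 := by
      simp [hG, Finsupp.add_apply, Finsupp.single_apply]
    have h2 : G j i = F j i := by
      simp [hG, Finsupp.add_apply, Finsupp.single_apply, Ne.symm hne]
    have h3 := hF2 i _ (hF1 j)
    rw [hij] at h1
    omega
  have hcard := Finset.card_le_card_of_injOn G (fun i _ => hkey i) hinj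
  simpa using hcard

/-- Key computation: the top homogeneous component of `((∑ X i) - 1) * r`. -/
lemma partC_aux (n e : ℕ) (r : MvPolynomial (Fin n) ℝ) (hre : r.totalDegree ≤ e) :
    homogeneousComponent (e + 1) (((∑ i, X i) - 1) * r)
      = (∑ i, X i) * homogeneousComponent e r := by
  have hsum1 : (∑ i : Fin n, (X i : MvPolynomial (Fin n) ℝ)).IsHomogeneous 1 :=
    IsHomogeneous.sum _ _ _ fun i _ => isHomogeneous_X _ _
  rw [sub_mul, one_mul, map_sub,
    homogeneousComponent_eq_zero _ r (Nat.lt_succ_of_le hre), sub_zero]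
  conv_lhs => rw [← sum_homogeneousComponent r, Finset.mul_sum, map_sum]
  have hterm : ∀ k, homogeneousComponent (e + 1)
      ((∑ i, X i) * homogeneousComponent k r)
      = if k = e then (∑ i, X i) * homogeneousComponent k r else 0 := by
    intro k
    rw [homogeneousComponent_of_mem
      ((mem_homogeneousSubmodule (1 + k) _).mpr
        (hsum1.mul (homogeneousComponent_isHomogeneous k r)))]
    exact if_congr ⟨fun h => by omega, fun h => by omega⟩ rfl rfl
  simp only [hterm]
  rw [Finset.sum_ite_eq' (Finset.range (r.totalDegree + 1)) e
    (fun k => (∑ i, X i) * homogeneousComponent k r)]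
  split_ifs with hmem
  · rfl
  · rw [Finset.mem_range, not_lt] at hmem
    rw [homogeneousComponent_eq_zero _ r (by omega), mul_zero]

theorem stmt_7 (n d : ℕ) (hd : 0 < d) (p : MvPolynomial (Fin n) ℝ)
    (hdeg : p.totalDegree = d)
    (hone : ∀ x : Fin n → ℝ, ∑ i, x i = 1 → eval x p = 1) :
    n ≤ (p.support.filter fun m => (m.sum fun _ e => e) = d).card := by
  rcases Nat.eq_zero_or_pos n with hn | hn
  · exact (le_of_eq hn).trans (Nat.zero_le _)
  obtain ⟨m, rfl⟩ := Nat.exists_eq_succ_of_ne_zero hn.ne'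
  obtain ⟨r, hr⟩ := partA_aux m p hone
  have hp0 : p ≠ 0 := by
    intro h
    rw [h, totalDegree_zero] at hdeg
    omega
  have hr0 : r ≠ 0 := by
    intro h
    rw [h, mul_zero, sub_eq_zero] at hr
    rw [hr, totalDegree_one] at hdeg
    omega
  -- top homogeneous component of p is nonzero
  have htop : ∀ (q : MvPolynomial (Fin (m + 1)) ℝ), q ≠ 0 →
      homogeneousComponent q.totalDegree q ≠ 0 := by
    intro q hq
    have hsupp : q.support.Nonempty :=
      Finset.nonempty_iff_ne_empty.mpr (fun he => hq (support_eq_empty.mp he))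
    obtain ⟨b, hb, hbd⟩ := Finset.exists_mem_eq_sup q.support hsupp
      (fun s => s.sum fun _ e => e)
    intro hzero
    have := coeff_homogeneousComponent (φ := q) q.totalDegree b
    rw [hzero] at this
    have hdeg' : b.degree = q.totalDegree := by
      rw [totalDegree, hbd]
      rfl
    rw [if_pos hdeg', coeff_zero] at this
    exact mem_support_iff.mp hb this.symm
  have hXsum : (∑ i : Fin (m + 1), (X i : MvPolynomial (Fin (m + 1)) ℝ)) ≠ 0 := by
    intro h
    have : coeff (Finsupp.single (0 : Fin (m + 1)) 1)
        (∑ i : Fin (m + 1), (X i : MvPolynomial (Fin (m + 1)) ℝ)) = 1 := by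
      rw [coeff_sum]
      rw [Finset.sum_eq_single (0 : Fin (m + 1))]
      · rw [coeff_X', if_pos rfl]
      · intro j _ hj
        rw [coeff_X', if_neg]
        intro hcontra
        exact hj (Finsupp.single_left_injective (one_ne_zero (α := ℕ)) hcontra)
      · simp
    rw [h, coeff_zero] at this
    norm_num at this
  -- degree bound on r
  have hrd : r.totalDegree + 1 ≤ d := by
    have hcomp := partC_aux (m + 1) r.totalDegree r le_rfl
    have hne : homogeneousComponent (r.totalDegree + 1) (((∑ i, X i) - 1) * r) ≠ 0 := by
      rw [hcomp]
      exact mul_ne_zero hXsum (htop r hr0)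
    rw [← hr] at hne
    have hlt : ¬ (p - 1).totalDegree < r.totalDegree + 1 := by
      intro hcontra
      exact hne (homogeneousComponent_eq_zero _ _ hcontra)
    have hsub : (p - 1).totalDegree ≤ d := by
      have : p - 1 = p + C (-1) := by
        rw [map_neg, map_one]
        ring
      rw [this]
      refine le_trans (totalDegree_add p (C (-1))) ?_
      simp [hdeg, totalDegree_C]
    omega
  -- homogeneous component of degree d of p
  have hd1 : d - 1 + 1 = d := by omega
  have hcomp2 := partC_aux (m + 1) (d - 1) r (by omega)
  rw [hd1] at hcomp2
  have hone' : homogeneousComponent d (1 : MvPolynomial (Fin (m + 1)) ℝ) = 0 := by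
    have h1 : (1 : MvPolynomial (Fin (m + 1)) ℝ) ∈
        homogeneousSubmodule (Fin (m + 1)) ℝ 0 :=
      (isHomogeneous_one _ _)
    rw [homogeneousComponent_of_mem h1, if_neg (by omega)]
  have hpd : homogeneousComponent d p = (∑ i, X i) * homogeneousComponent (d - 1) r := by
    have : homogeneousComponent d p
        = homogeneousComponent d (p - 1) + homogeneousComponent d 1 := by
      rw [← map_add]
      congr 1
      ring
    rw [this, hone', add_zero, hr, hcomp2]
  have hpdne : homogeneousComponent d p ≠ 0 := by
    rw [← hdeg]
    exact htop p hp0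
  have hhne : homogeneousComponent (d - 1) r ≠ 0 := by
    intro h
    rw [h, mul_zero] at hpd
    exact hpdne hpd
  have hB := partB_aux (m + 1) (homogeneousComponent (d - 1) r) hhne
  rw [← hpd] at hB
  refine le_trans hB (Finset.card_le_card ?_)
  intro b hb
  rw [mem_support_iff, coeff_homogeneousComponent] at hb
  rw [Finset.mem_filter, mem_support_iff]
  split_ifs at hb with hdd
  · exact ⟨hb, hdd⟩
  · exact absurd rfl hb
end

section
/- Assume the two-variable degree bound: every polynomial q ∈ ℝ[u,v] with nonnegative coefficients equal to 1 on {u+v=1} satisfies deg q ≤ 2N(q) - 3 (for deg q ≥ 1). Then for n ≥ 2, every p ∈ ℝ[x_1,...,x_n] with nonnegative coefficients, equal to 1 on {Σx_j = 1}, of degree d ≥ 1, satisfies d ≤ (2N(p) - 3)/(n - 1). -/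
open MvPolynomial

/-- Exponent map of the Veronese substitution: a monomial `x^α` in `n` variables maps to
`u^{Σ α_j (m-j)} v^{Σ α_j j}` where `m = n-1`. -/
noncomputable def verExp (n : ℕ) (α : Fin n →₀ ℕ) : Fin 2 →₀ ℕ :=
  Finsupp.single 0 (∑ j : Fin n, α j * ((n-1) - (j:ℕ))) + Finsupp.single 1 (∑ j : Fin n, α j * (j:ℕ))

/-- The pull-back of `p` under the Veronese map. -/
noncomputable def verPoly (n : ℕ) (p : MvPolynomial (Fin n) ℝ) : MvPolynomial (Fin 2) ℝ :=
  ∑ α ∈ p.support, monomial (verExp n α) (coeff α p * ∏ j : Fin n, ((n-1).choose j : ℝ) ^ α j)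

lemma verExp_degree (n : ℕ) (hn : 2 ≤ n) (α : Fin n →₀ ℕ) :
    ((verExp n α).sum fun _ e => e) = (n-1) * (α.sum fun _ e => e) := by
  have h1 : ((verExp n α).sum fun _ e => e) = ∑ i : Fin 2, verExp n α i :=
    Finsupp.sum_fintype _ _ (fun _ => rfl)
  have h2 : (α.sum fun _ e => e) = ∑ j : Fin n, α j :=
    Finsupp.sum_fintype _ _ (fun _ => rfl)
  rw [h1, h2, Fin.sum_univ_two]
  simp only [verExp, Finsupp.add_apply, Finsupp.single_apply]
  norm_num
  rw [← Finset.sum_add_distrib, Finset.mul_sum]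
  refine Finset.sum_congr rfl fun j _ => ?_
  have hj : (j:ℕ) ≤ n - 1 := by omega
  rw [← Nat.mul_add, Nat.sub_add_cancel hj, Nat.mul_comm]

theorem stmt_9 (n : ℕ) (hn : 2 ≤ n)
    (h2 : ∀ q : MvPolynomial (Fin 2) ℝ,
      (∀ m, 0 ≤ coeff m q) →
      (∀ x : Fin 2 → ℝ, ∑ i, x i = 1 → eval x q = 1) →
      1 ≤ q.totalDegree →
      (q.totalDegree : ℝ) ≤ 2 * q.support.card - 3)
    (p : MvPolynomial (Fin n) ℝ)
    (hnonneg : ∀ m, 0 ≤ coeff m p)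
    (hone : ∀ x : Fin n → ℝ, ∑ i, x i = 1 → eval x p = 1)
    (hd : 1 ≤ p.totalDegree) :
    (p.totalDegree : ℝ) ≤ (2 * p.support.card - 3) / (n - 1) := by
  set m := n - 1 with hm
  set q := verPoly n p with hq
  set d := p.totalDegree with hdd
  -- positivity of the binomial-coefficient products
  have hchoose : ∀ (α : Fin n →₀ ℕ), 0 < ∏ j : Fin n, ((m.choose j : ℝ)) ^ α j := by
    intro α
    apply Finset.prod_pos
    intro j _
    have : 0 < m.choose j := Nat.choose_pos (by omega)
    positivity
  -- coefficient formula
  have hcoeff : ∀ β : Fin 2 →₀ ℕ, coeff β q =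
      ∑ α ∈ p.support, if verExp n α = β then coeff α p * ∏ j : Fin n, ((m.choose j : ℝ)) ^ α j else 0 := by
    intro β
    rw [hq, verPoly, coeff_sum]
    exact Finset.sum_congr rfl fun α _ => coeff_monomial β _ _
  -- nonneg coefficients of q
  have hqnonneg : ∀ β, 0 ≤ coeff β q := by
    intro β
    rw [hcoeff]
    apply Finset.sum_nonneg
    intro α _
    split
    · exact mul_nonneg (hnonneg α) (hchoose α).le
    · exact le_refl 0
  -- evaluation of q
  have hqone : ∀ x : Fin 2 → ℝ, ∑ i, x i = 1 → eval x q = 1 := by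
    intro x hx
    set y : Fin n → ℝ := fun j => (m.choose j : ℝ) * x 0 ^ (m - (j:ℕ)) * x 1 ^ (j:ℕ) with hy
    have hysum : ∑ j, y j = 1 := by
      have hx2 : x 0 + x 1 = 1 := by rw [← Fin.sum_univ_two x]; exact hx
      have hbin := add_pow (x 1) (x 0) m
      calc ∑ j, y j = ∑ j ∈ Finset.range n, (m.choose j : ℝ) * x 0 ^ (m - j) * x 1 ^ j := by
            rw [Fin.sum_univ_eq_sum_range (fun j => (m.choose j : ℝ) * x 0 ^ (m - j) * x 1 ^ j) n]
        _ = ∑ j ∈ Finset.range (m+1), x 1 ^ j * x 0 ^ (m - j) * (m.choose j : ℝ) := by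
            rw [show m + 1 = n by omega]; exact Finset.sum_congr rfl fun j _ => by ring
        _ = (x 1 + x 0) ^ m := (add_pow (x 1) (x 0) m).symm
        _ = 1 := by rw [add_comm, hx2, one_pow]
    have hevaly : eval y p = 1 := hone y hysum
    rw [hq, verPoly, map_sum, ← hevaly, eval_eq' y p]
    refine Finset.sum_congr rfl fun α _ => ?_
    rw [eval_monomial]
    have hprod : ((verExp n α).prod fun i e => x i ^ e) =
        x 0 ^ (∑ j : Fin n, α j * (m - (j:ℕ))) * x 1 ^ (∑ j : Fin n, α j * (j:ℕ)) := by
      rw [Finsupp.prod_fintype _ _ (fun i => pow_zero (x i)), Fin.prod_univ_two]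
      simp [verExp, Finsupp.add_apply, Finsupp.single_apply, hm]
    rw [hprod]
    have : ∀ j : Fin n, y j ^ α j =
        ((m.choose j : ℝ)) ^ α j * (x 0 ^ (α j * (m - (j:ℕ))) * x 1 ^ (α j * (j:ℕ))) := by
      intro j
      rw [hy]
      simp only [mul_pow, ← pow_mul]
      ring_nf
    simp only [this]
    rw [Finset.prod_mul_distrib, Finset.prod_mul_distrib,
      Finset.prod_pow_eq_pow_sum, Finset.prod_pow_eq_pow_sum]
    ring
  -- support bound
  have hsupport : q.support ⊆ p.support.image (verExp n) := by
    intro β hβ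
    rw [mem_support_iff, hcoeff] at hβ
    obtain ⟨α, hα, hne⟩ := Finset.exists_ne_zero_of_sum_ne_zero hβ
    rw [Finset.mem_image]
    refine ⟨α, hα, ?_⟩
    by_contra h
    simp [h] at hne
  have hcard : q.support.card ≤ p.support.card :=
    le_trans (Finset.card_le_card hsupport) (Finset.card_image_le)
  -- degree lower bound
  have hp0 : p ≠ 0 := by
    intro h
    rw [hdd, h, totalDegree_zero] at hd
    omega
  obtain ⟨α, hαs, hαd⟩ := p.support.exists_mem_eq_sup (support_nonempty.mpr hp0)
    (fun s => s.sum fun _ e => e)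
  have hαd' : (α.sum fun _ e => e) = d := hαd.symm
  have hcpos : 0 < coeff (verExp n α) q := by
    rw [hcoeff]
    apply Finset.sum_pos'
    · intro β _
      split
      · exact mul_nonneg (hnonneg β) (hchoose β).le
      · exact le_refl 0
    · refine ⟨α, hαs, ?_⟩
      rw [if_pos rfl]
      have hcα : coeff α p ≠ 0 := mem_support_iff.mp hαs
      exact mul_pos (lt_of_le_of_ne (hnonneg α) (Ne.symm hcα)) (hchoose α)
  have hdegq : m * d ≤ q.totalDegree := by
    have h1 : ((verExp n α).sum fun _ e => e) ≤ q.totalDegree :=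
      le_totalDegree (mem_support_iff.mpr hcpos.ne')
    rwa [verExp_degree n hn α, hαd'] at h1
  have hdq1 : 1 ≤ q.totalDegree :=
    le_trans (Nat.one_le_iff_ne_zero.mpr (Nat.mul_ne_zero (by omega) (by omega))) hdegq
  have hreal := h2 q hqnonneg hqone hdq1
  have hcard' : (q.support.card : ℝ) ≤ (p.support.card : ℝ) := Nat.cast_le.mpr hcard
  have hA : ((m : ℝ)) * (d : ℝ) ≤ 2 * (p.support.card : ℝ) - 3 := by
    have h1 : ((m * d : ℕ) : ℝ) ≤ (q.totalDegree : ℝ) := Nat.cast_le.mpr hdegq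
    push_cast at h1
    linarith
  have hn1 : (0:ℝ) < (n:ℝ) - 1 := by
    have : (2:ℝ) ≤ (n:ℝ) := by exact_mod_cast hn
    linarith
  have hmcast : (m : ℝ) = (n:ℝ) - 1 := by
    rw [hm]
    push_cast [Nat.cast_sub (by omega : 1 ≤ n)]
    ring
  rw [le_div_iff₀ hn1, ← hmcast, mul_comm]
  exact hA
end

section
/- For n ≥ 2 and d ≥ 1, the polynomial g_d(x) = x_n^d + (x_1 + ... + x_{n-1})·Σ_{k=0}^{d-1} x_n^k has nonnegative coefficients, is identically 1 on the hyperplane {x : x_1+...+x_n = 1}, has degree d, and has exactly (n-1)d + 1 distinct monomials. -/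
open MvPolynomial

theorem stmt_13 (n d : ℕ) (hn : 1 ≤ n) (hd : 1 ≤ d)
    (g : MvPolynomial (Fin (n + 1)) ℝ)
    (hg : g = X (Fin.last n) ^ d +
      (∑ i : Fin n, X i.castSucc) * ∑ k ∈ Finset.range d, X (Fin.last n) ^ k) :
    (∀ m, 0 ≤ coeff m g) ∧
    (∀ x : Fin (n + 1) → ℝ, ∑ i, x i = 1 → eval x g = 1) ∧
    g.totalDegree = d ∧
    g.support.card = n * d + 1 := by
  classical
  set f : Fin n × ℕ → (Fin (n + 1) →₀ ℕ) :=
    fun p => Finsupp.single p.1.castSucc 1 + Finsupp.single (Fin.last n) p.2 with hf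
  set T : Finset (Fin (n + 1) →₀ ℕ) := (Finset.univ ×ˢ Finset.range d).image f with hT
  set S : Finset (Fin (n + 1) →₀ ℕ) := insert (Finsupp.single (Fin.last n) d) T with hS
  have hcast : ∀ i : Fin n, i.castSucc ≠ Fin.last n := fun i => (Fin.castSucc_lt_last i).ne
  -- f never equals single last d
  have hfne : ∀ p : Fin n × ℕ, f p ≠ Finsupp.single (Fin.last n) d := by
    intro p h
    have := DFunLike.congr_fun h p.1.castSucc
    simp [hf, Finsupp.single_apply, hcast p.1, (hcast p.1).symm] at this
  have hnotmem : Finsupp.single (Fin.last n) d ∉ T := by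
    simp only [hT, Finset.mem_image]
    rintro ⟨p, -, hp⟩
    exact hfne p hp
  -- injectivity of f
  have hinj : Function.Injective f := by
    intro p q h
    have h1 := DFunLike.congr_fun h p.1.castSucc
    simp [hf, Finsupp.single_apply, hcast p.1, (hcast p.1).symm, (hcast q.1).symm,
      Fin.castSucc_inj] at h1
    have h1' : q.1 = p.1 := by
      by_contra hne
      simp [hne] at h1
    have h2 := DFunLike.congr_fun h (Fin.last n)
    simp [hf, Finsupp.single_apply, hcast p.1, hcast q.1] at h2
    exact Prod.ext h1'.symm h2
  -- rewrite g as a sum of monomials over S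
  have hgS : g = ∑ m ∈ S, monomial m 1 := by
    rw [hS, Finset.sum_insert hnotmem, hT, Finset.sum_image (fun x _ y _ h => hinj h),
      Finset.sum_product, hg]
    congr 1
    · rw [X_pow_eq_monomial]
    · rw [Finset.sum_mul_sum]
      refine Finset.sum_congr rfl fun i _ => Finset.sum_congr rfl fun k _ => ?_
      rw [X_pow_eq_monomial, ← pow_one (X (Fin.castSucc i)), X_pow_eq_monomial,
        monomial_mul, one_mul]
  -- coefficient formula
  have hcoeff : ∀ m, coeff m g = if m ∈ S then 1 else 0 := by
    intro m
    rw [hgS]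
    simp only [coeff_sum, coeff_monomial]
    exact Finset.sum_ite_eq' S m (fun _ => 1)
  have hsupp : g.support = S := by
    ext m
    rw [mem_support_iff, hcoeff]
    split <;> simp_all
  refine ⟨?_, ?_, ?_, ?_⟩
  · intro m; rw [hcoeff]; split <;> norm_num
  · intro x hx
    rw [Fin.sum_univ_castSucc] at hx
    rw [hg]
    simp only [map_add, map_mul, map_sum, map_pow, eval_X]
    have hgeo := geom_sum_mul (x (Fin.last n)) d
    have hs : ∑ i : Fin n, x i.castSucc = 1 - x (Fin.last n) := by linarith
    rw [hs]
    linear_combination -hgeo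
  · -- total degree
    rw [totalDegree, hsupp, hS, Finset.sup_insert]
    have h1 : (Finsupp.single (Fin.last n) d).sum (fun _ e => e) = d :=
      Finsupp.sum_single_index rfl
    rw [h1]
    have h2 : T.sup (fun m => m.sum fun _ e => e) ≤ d := by
      refine Finset.sup_le fun m hm => ?_
      rw [hT, Finset.mem_image] at hm
      obtain ⟨⟨i, k⟩, hp, rfl⟩ := hm
      simp only [Finset.mem_product, Finset.mem_range] at hp
      have : (f (i, k)).sum (fun _ e => e) = 1 + k := by
        rw [hf]
        rw [Finsupp.sum_add_index (by simp) (by simp)]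
        rw [Finsupp.sum_single_index rfl, Finsupp.sum_single_index rfl]
      rw [this]
      omega
    exact sup_eq_left.mpr h2
  · rw [hsupp, hS, Finset.card_insert_of_notMem hnotmem, hT,
      Finset.card_image_of_injective _ hinj, Finset.card_product]
    simp [mul_comm]
end

section
/- Let n ≥ 3 and let p ∈ ℝ[x_1,...,x_n] have nonnegative coefficients, equal 1 on {x : Σ x_j = 1}, and have degree d ≥ 1. If N(p) < n then d = 0 (contradiction, so in fact N(p) ≥ n whenever d ≥ 1); and if N(p) < 2n - 1 then d ≤ 1. -/
open MvPolynomial Finset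

private lemma prod_pow_eq_pure {n : ℕ} (x : Fin n → ℝ) (m : Fin n →₀ ℕ) (j : Fin n)
    (h : ∀ i, i ≠ j → m i = 0) : ∏ i, x i ^ m i = x j ^ m j :=
  Finset.prod_eq_single j (fun b _ hb => by rw [h b hb, pow_zero])
    (fun h => absurd (mem_univ j) h)

private lemma prod_pow_eq_zero' {n : ℕ} {x : Fin n → ℝ} {m : Fin n →₀ ℕ} (i : Fin n)
    (hx : x i = 0) (hm : m i ≠ 0) : ∏ l, x l ^ m l = 0 :=
  Finset.prod_eq_zero (mem_univ i) (by rw [hx]; exact zero_pow hm)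

private lemma sum_delta {n : ℕ} (j : Fin n) : (∑ i, if i = j then (1:ℝ) else 0) = 1 := by
  simp

private lemma eval_delta {n : ℕ} (p : MvPolynomial (Fin n) ℝ) (j : Fin n) :
    eval (fun i => if i = j then (1:ℝ) else 0) p
      = ∑ m ∈ p.support, if (∀ i, i ≠ j → m i = 0) then coeff m p else 0 := by
  rw [eval_eq']
  refine Finset.sum_congr rfl fun m _ => ?_
  by_cases h : ∀ i, i ≠ j → m i = 0
  · rw [if_pos h, prod_pow_eq_pure _ m j h, if_pos rfl, one_pow, mul_one]
  · rw [if_neg h]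
    push_neg at h
    obtain ⟨i, hij, hmi⟩ := h
    rw [prod_pow_eq_zero' i (by rw [if_neg hij]) hmi, mul_zero]

private lemma support_zero_of_const {n : ℕ} (hn : 3 ≤ n) (p : MvPolynomial (Fin n) ℝ)
    (hnonneg : ∀ m, 0 ≤ coeff m p)
    (hone : ∀ x : Fin n → ℝ, ∑ i, x i = 1 → eval x p = 1)
    (hc : coeff 0 p = 1) : ∀ m ∈ p.support, m = 0 := by
  intro m hm
  by_contra hm0
  have hn0 : (0:ℝ) < n := by
    have : (3:ℝ) ≤ n := by exact_mod_cast hn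
    linarith
  have hsum : ∑ _i : Fin n, (n:ℝ)⁻¹ = 1 := by
    rw [Finset.sum_const, card_univ, Fintype.card_fin, nsmul_eq_mul]
    field_simp
  have heval := hone (fun _ => (n:ℝ)⁻¹) hsum
  rw [eval_eq'] at heval
  have hpos : ∀ m' : Fin n →₀ ℕ, 0 < ∏ i, (n:ℝ)⁻¹ ^ m' i := fun m' =>
    Finset.prod_pos fun i _ => pow_pos (by positivity) _
  have h0mem : (0 : Fin n →₀ ℕ) ∈ p.support := by
    rw [mem_support_iff, hc]; norm_num
  have hsub : ({0, m} : Finset (Fin n →₀ ℕ)) ⊆ p.support := by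
    intro a ha
    rcases Finset.mem_insert.1 ha with rfl | ha
    · exact h0mem
    · rwa [Finset.mem_singleton.1 ha]
  have hle : ∑ m' ∈ ({0, m} : Finset (Fin n →₀ ℕ)), coeff m' p * ∏ i, (n:ℝ)⁻¹ ^ m' i
      ≤ ∑ m' ∈ p.support, coeff m' p * ∏ i, (n:ℝ)⁻¹ ^ m' i :=
    Finset.sum_le_sum_of_subset_of_nonneg hsub fun m' _ _ =>
      mul_nonneg (hnonneg m') (le_of_lt (hpos m'))
  rw [Finset.sum_pair (Ne.symm hm0), heval] at hle
  have ht0 : coeff 0 p * ∏ i, (n:ℝ)⁻¹ ^ (0 : Fin n →₀ ℕ) i = 1 := by simp [hc]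
  have htm : 0 < coeff m p * ∏ i, (n:ℝ)⁻¹ ^ m i :=
    mul_pos (lt_of_le_of_ne (hnonneg m) (Ne.symm (mem_support_iff.1 hm))) (hpos m)
  rw [ht0] at hle
  linarith

private lemma coeff_zero_eq_one {n : ℕ} (p : MvPolynomial (Fin n) ℝ)
    (hone : ∀ x : Fin n → ℝ, ∑ i, x i = 1 → eval x p = 1) (j : Fin n)
    (h : ∀ m ∈ p.support, (∀ i, i ≠ j → m i = 0) → m = 0) : coeff 0 p = 1 := by
  have h1 := hone (fun i => if i = j then (1:ℝ) else 0) (sum_delta j)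
  rw [eval_delta p j] at h1
  have hcong : ∀ m ∈ p.support, (if (∀ i, i ≠ j → m i = 0) then coeff m p else 0)
      = if m = 0 then coeff m p else 0 := by
    intro m hm
    by_cases hc : ∀ i, i ≠ j → m i = 0
    · rw [if_pos hc, if_pos (h m hm hc)]
    · rw [if_neg hc, if_neg]
      rintro rfl
      exact hc fun i _ => rfl
  rw [Finset.sum_congr rfl hcong,
    Finset.sum_ite_eq' p.support 0 (fun m => coeff m p)] at h1
  by_cases h0 : (0 : Fin n →₀ ℕ) ∈ p.support
  · rwa [if_pos h0] at h1
  · rw [if_neg h0] at h1; norm_num at h1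

private lemma pure_exists {n : ℕ} (hn : 3 ≤ n) (p : MvPolynomial (Fin n) ℝ)
    (hnonneg : ∀ m, 0 ≤ coeff m p)
    (hone : ∀ x : Fin n → ℝ, ∑ i, x i = 1 → eval x p = 1)
    (hne : ∃ m ∈ p.support, m ≠ 0) (j : Fin n) :
    ∃ m ∈ p.support, (∀ i, i ≠ j → m i = 0) ∧ m ≠ 0 := by
  by_contra hno
  push_neg at hno
  obtain ⟨m, hm, hm0⟩ := hne
  exact hm0 (support_zero_of_const hn p hnonneg hone
    (coeff_zero_eq_one p hone j hno) m hm)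

private lemma sum_two_delta {n : ℕ} {j k : Fin n} (hkj : k ≠ j) :
    (∑ i, if i = j then (1/2:ℝ) else if i = k then 1/2 else 0) = 1 := by
  have hsplit : ∀ i : Fin n, (if i = j then (1/2:ℝ) else if i = k then 1/2 else 0)
      = (if i = j then (1/2:ℝ) else 0) + (if i = k then (1/2:ℝ) else 0) := by
    intro i
    by_cases h1 : i = j
    · subst h1
      rw [if_pos rfl, if_pos rfl, if_neg (Ne.symm hkj)]; norm_num
    · by_cases h2 : i = k
      · simp [h1, h2, hkj]
      · simp [h1, h2]
  rw [Finset.sum_congr rfl fun i _ => hsplit i, Finset.sum_add_distrib]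
  simp
  norm_num

private lemma mixed_exists {n : ℕ} (p : MvPolynomial (Fin n) ℝ)
    (hnonneg : ∀ m, 0 ≤ coeff m p)
    (hone : ∀ x : Fin n → ℝ, ∑ i, x i = 1 → eval x p = 1)
    {j k : Fin n} (hkj : k ≠ j) {m0 : Fin n →₀ ℕ} (hm0 : m0 ∈ p.support)
    (hpure : ∀ i, i ≠ j → m0 i = 0) (hd : 2 ≤ m0 j) :
    ∃ m ∈ p.support, m j ≠ 0 ∧ m k ≠ 0 ∧ ∀ i, i ≠ j → i ≠ k → m i = 0 := by
  by_contra hno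
  push_neg at hno
  have e1 : ∑ m ∈ p.support, coeff m p * ∏ i, (if i = j then (1:ℝ) else 0) ^ m i = 1 := by
    rw [← eval_eq']; exact hone _ (sum_delta j)
  have e2 : ∑ m ∈ p.support, coeff m p * ∏ i, (if i = k then (1:ℝ) else 0) ^ m i = 1 := by
    rw [← eval_eq']; exact hone _ (sum_delta k)
  have e3 : ∑ m ∈ p.support,
      coeff m p * ∏ i, (if i = j then (1/2:ℝ) else if i = k then 1/2 else 0) ^ m i = 1 := by
    rw [← eval_eq']; exact hone _ (sum_two_delta hkj)
  have key : ∀ m ∈ p.support,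
      coeff m p * ∏ i, (if i = j then (1/2:ℝ) else if i = k then 1/2 else 0) ^ m i
      ≤ (coeff m p * ∏ i, (if i = j then (1:ℝ) else 0) ^ m i
        + coeff m p * ∏ i, (if i = k then (1:ℝ) else 0) ^ m i) / 2 := by
    intro m hm
    have hc := hnonneg m
    by_cases hout : ∀ i, i ≠ j → i ≠ k → m i = 0
    · have hjk0 : m j = 0 ∨ m k = 0 := by
        by_contra hcon
        push_neg at hcon
        obtain ⟨i, h1, h2, h3⟩ := hno m hm hcon.1 hcon.2
        exact h3 (hout i h1 h2)
      rcases hjk0 with hj0 | hk0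
      · -- m is pure in k
        have hpk : ∀ i, i ≠ k → m i = 0 := by
          intro i hik
          by_cases hij : i = j
          · subst hij; exact hj0
          · exact hout i hij hik
        rw [prod_pow_eq_pure _ m k hpk, prod_pow_eq_pure _ m k hpk,
          prod_pow_eq_pure _ m k hpk, if_neg hkj, if_neg hkj, if_pos rfl, if_pos rfl]
        rcases eq_or_ne (m k) 0 with h0 | h0
        · rw [h0]; norm_num
        · rw [zero_pow h0, one_pow, mul_zero, mul_one, zero_add]
          have hle : (1/2:ℝ) ^ m k ≤ 1/2 := by
            calc (1/2:ℝ) ^ m k ≤ (1/2:ℝ)^1 :=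
              pow_le_pow_of_le_one (by norm_num) (by norm_num) (Nat.one_le_iff_ne_zero.mpr h0)
            _ = 1/2 := pow_one _
          nlinarith [hle, hc]
      · -- m is pure in j
        have hpj : ∀ i, i ≠ j → m i = 0 := by
          intro i hij
          by_cases hik : i = k
          · subst hik; exact hk0
          · exact hout i hij hik
        rw [prod_pow_eq_pure _ m j hpj, prod_pow_eq_pure _ m j hpj,
          prod_pow_eq_pure _ m j hpj, if_pos rfl, if_pos rfl, if_neg (Ne.symm hkj)]
        rcases eq_or_ne (m j) 0 with h0 | h0
        · rw [h0]; norm_num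
        · rw [zero_pow h0, one_pow, mul_zero, mul_one, add_zero]
          have hle : (1/2:ℝ) ^ m j ≤ 1/2 := by
            calc (1/2:ℝ) ^ m j ≤ (1/2:ℝ)^1 :=
              pow_le_pow_of_le_one (by norm_num) (by norm_num) (Nat.one_le_iff_ne_zero.mpr h0)
            _ = 1/2 := pow_one _
          nlinarith [hle, hc]
    · push_neg at hout
      obtain ⟨i, h1, h2, h3⟩ := hout
      rw [prod_pow_eq_zero' i (by rw [if_neg h1, if_neg h2]) h3,
        prod_pow_eq_zero' i (if_neg h1) h3, prod_pow_eq_zero' i (if_neg h2) h3]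
      norm_num
  have strict : coeff m0 p * ∏ i, (if i = j then (1/2:ℝ) else if i = k then 1/2 else 0) ^ m0 i
      < (coeff m0 p * ∏ i, (if i = j then (1:ℝ) else 0) ^ m0 i
        + coeff m0 p * ∏ i, (if i = k then (1:ℝ) else 0) ^ m0 i) / 2 := by
    have hc : 0 < coeff m0 p :=
      lt_of_le_of_ne (hnonneg m0) (Ne.symm (mem_support_iff.1 hm0))
    rw [prod_pow_eq_pure _ m0 j hpure, prod_pow_eq_pure _ m0 j hpure,
      prod_pow_eq_pure _ m0 j hpure, if_pos rfl, if_pos rfl, if_neg (Ne.symm hkj),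
      one_pow, mul_one, zero_pow (by omega : m0 j ≠ 0), mul_zero, add_zero]
    have hlt : (1/2:ℝ) ^ m0 j ≤ 1/4 := by
      calc (1/2:ℝ) ^ m0 j ≤ (1/2:ℝ)^2 :=
        pow_le_pow_of_le_one (by norm_num) (by norm_num) hd
      _ = 1/4 := by norm_num
    have := mul_le_mul_of_nonneg_left hlt (le_of_lt hc)
    linarith
  have hlt := Finset.sum_lt_sum key ⟨m0, hm0, strict⟩
  have hsplit : ∑ m ∈ p.support,
      (coeff m p * ∏ i, (if i = j then (1:ℝ) else 0) ^ m i
        + coeff m p * ∏ i, (if i = k then (1:ℝ) else 0) ^ m i) / 2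
      = (∑ m ∈ p.support, coeff m p * ∏ i, (if i = j then (1:ℝ) else 0) ^ m i
        + ∑ m ∈ p.support, coeff m p * ∏ i, (if i = k then (1:ℝ) else 0) ^ m i) / 2 := by
    rw [← Finset.sum_div, Finset.sum_add_distrib]
  rw [e3, hsplit, e1, e2] at hlt
  norm_num at hlt

private lemma ite_mem_coeff {n : ℕ} (p : MvPolynomial (Fin n) ℝ) (m : Fin n →₀ ℕ) :
    (if m ∈ p.support then coeff m p else 0) = coeff m p := by
  split_ifs with h
  · rfl
  · exact (notMem_support_iff.mp h).symm

private lemma coeff_single_aux {n : ℕ} (p : MvPolynomial (Fin n) ℝ)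
    (hone : ∀ x : Fin n → ℝ, ∑ i, x i = 1 → eval x p = 1)
    (hB : ∀ m ∈ p.support, ∀ i : Fin n, (∀ l, l ≠ i → m l = 0) → m i ≤ 1) (i : Fin n) :
    coeff 0 p + coeff (Finsupp.single i 1) p = 1 := by
  have h1 := hone (fun l => if l = i then (1:ℝ) else 0) (sum_delta i)
  rw [eval_delta p i] at h1
  have hne : (Finsupp.single i 1 : Fin n →₀ ℕ) ≠ 0 := by
    intro h
    have := Finsupp.single_eq_zero.mp h
    norm_num at this
  have hcong : ∀ m ∈ p.support, (if (∀ l, l ≠ i → m l = 0) then coeff m p else 0)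
      = (if m = 0 then coeff m p else 0)
        + (if m = Finsupp.single i 1 then coeff m p else 0) := by
    intro m hm
    by_cases hc : ∀ l, l ≠ i → m l = 0
    · have hle := hB m hm i hc
      have hform : m = 0 ∨ m = Finsupp.single i 1 := by
        have hform' : m = Finsupp.single i (m i) := by
          ext l
          by_cases hl : l = i
          · subst hl; simp
          · rw [hc l hl, Finsupp.single_eq_of_ne' (Ne.symm hl)]
        interval_cases h : m i
        · left; rw [hform']; simp
        · right; rw [hform']
      rcases hform with h0 | hs
      · rw [if_pos hc, if_pos h0, if_neg, add_zero]
        rw [h0]; exact Ne.symm hne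
      · rw [if_pos hc, if_pos hs, if_neg, zero_add]
        rw [hs]; exact hne
    · rw [if_neg hc, if_neg, if_neg, add_zero]
      · intro h; subst h
        exact hc fun l hl => Finsupp.single_eq_of_ne' (Ne.symm hl)
      · intro h; subst h
        exact hc fun l _ => rfl
  rw [Finset.sum_congr rfl hcong, Finset.sum_add_distrib,
    Finset.sum_ite_eq' p.support 0 (fun m => coeff m p),
    Finset.sum_ite_eq' p.support (Finsupp.single i 1) (fun m => coeff m p),
    ite_mem_coeff, ite_mem_coeff] at h1
  exact h1

theorem stmt_14 (n : ℕ) (hn : 3 ≤ n)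
    (p : MvPolynomial (Fin n) ℝ)
    (hnonneg : ∀ m, 0 ≤ coeff m p)
    (hone : ∀ x : Fin n → ℝ, ∑ i, x i = 1 → eval x p = 1) :
    (p.support.card < n → p.totalDegree = 0) ∧
    (p.support.card < 2 * n - 1 → p.totalDegree ≤ 1) := by
  constructor
  · intro hN
    by_cases hz : ∀ m ∈ p.support, m = 0
    · have : p.totalDegree ≤ 0 := by
        rw [MvPolynomial.totalDegree]
        exact Finset.sup_le fun m hm => by rw [hz m hm]; simp
      omega
    · push_neg at hz
      exfalso
      have hpure := pure_exists hn p hnonneg hone hz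
      choose w hws hwp hw0 using hpure
      have winj : Function.Injective w := by
        intro a b hab
        by_contra hne2
        have ha : w a a ≠ 0 := by
          intro h
          apply hw0 a
          ext l
          by_cases hl : l = a
          · subst hl; exact h
          · exact hwp a l hl
        rw [hab] at ha
        exact ha (hwp b a hne2)
      have hcard := Finset.card_le_card_of_injOn (s := Finset.univ) w (fun j _ => hws j) winj.injOn
      simp only [Finset.card_univ, Fintype.card_fin] at hcard
      omega
  · intro hN
    by_contra h2
    have hmstar : ∃ m ∈ p.support, 2 ≤ m.sum fun _ e => e := by
      by_contra hc
      push_neg at hc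
      apply h2
      rw [MvPolynomial.totalDegree]
      exact Finset.sup_le fun m hm => Nat.lt_succ_iff.mp (hc m hm)
    obtain ⟨mst, hmsts, hmstd⟩ := hmstar
    by_cases hA : ∃ m ∈ p.support, ∃ j, (∀ i, i ≠ j → m i = 0) ∧ 2 ≤ m j
    · -- Case A: a pure monomial of degree ≥ 2 exists
      obtain ⟨m0, hm0s, j, hm0p, hm0d⟩ := hA
      have hne : ∃ m ∈ p.support, m ≠ 0 := by
        refine ⟨m0, hm0s, fun h => ?_⟩
        rw [h] at hm0d
        simp at hm0d
      have hpure := pure_exists hn p hnonneg hone hne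
      choose w hws hwp hw0 using hpure
      have winj : Function.Injective w := by
        intro a b hab
        by_contra hne2
        have ha : w a a ≠ 0 := by
          intro h
          apply hw0 a
          ext l
          by_cases hl : l = a
          · subst hl; exact h
          · exact hwp a l hl
        rw [hab] at ha
        exact ha (hwp b a hne2)
      have hv : ∀ k : Fin n, ∃ m, k ≠ j →
          m ∈ p.support ∧ m j ≠ 0 ∧ m k ≠ 0 ∧ ∀ i, i ≠ j → i ≠ k → m i = 0 := by
        intro k
        by_cases hk : k = j
        · exact ⟨0, fun h => absurd hk h⟩
        · obtain ⟨m, h1, h2, h3, h4⟩ := mixed_exists p hnonneg hone hk hm0s hm0p hm0d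
          exact ⟨m, fun _ => ⟨h1, h2, h3, h4⟩⟩
      choose v hv using hv
      have hAsub : Finset.univ.image w ⊆ p.support := by
        intro m hm
        obtain ⟨i2, _, rfl⟩ := Finset.mem_image.mp hm
        exact hws i2
      have hBsub : (Finset.univ.erase j).image v ⊆ p.support := by
        intro m hm
        obtain ⟨k2, hk2, rfl⟩ := Finset.mem_image.mp hm
        exact (hv k2 (Finset.ne_of_mem_erase hk2)).1
      have hcardA : (Finset.univ.image w).card = n := by
        rw [Finset.card_image_of_injective _ winj, Finset.card_univ, Fintype.card_fin]
      have hcardB : ((Finset.univ.erase j).image v).card = n - 1 := by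
        rw [Finset.card_image_of_injOn, Finset.card_erase_of_mem (Finset.mem_univ j),
          Finset.card_univ, Fintype.card_fin]
        intro a ha b hb hab
        have haj := Finset.ne_of_mem_erase ha
        have hbj := Finset.ne_of_mem_erase hb
        obtain ⟨_, _, ha3, _⟩ := hv a haj
        obtain ⟨_, _, _, hb4⟩ := hv b hbj
        by_contra hne2
        rw [hab] at ha3
        exact ha3 (hb4 a haj hne2)
      have hdisj : Disjoint (Finset.univ.image w) ((Finset.univ.erase j).image v) := by
        rw [Finset.disjoint_left]
        intro m hmA hmB
        obtain ⟨i2, _, rfl⟩ := Finset.mem_image.mp hmA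
        obtain ⟨k2, hk2, hvk⟩ := Finset.mem_image.mp hmB
        have hk2j := Finset.ne_of_mem_erase hk2
        obtain ⟨_, h2, h3, _⟩ := hv k2 hk2j
        have hji : j = i2 := by
          by_contra hji
          exact h2 (by rw [hvk]; exact hwp i2 j hji)
        have hki : k2 = i2 := by
          by_contra hki
          exact h3 (by rw [hvk]; exact hwp i2 k2 hki)
        exact hk2j (hki.trans hji.symm)
      have hunion : (Finset.univ.image w ∪ (Finset.univ.erase j).image v).card
          = n + (n - 1) := by
        rw [Finset.card_union_of_disjoint hdisj, hcardA, hcardB]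
      have hle := Finset.card_le_card (Finset.union_subset hAsub hBsub)
      rw [hunion] at hle
      omega
    · -- Case B: all pure monomials have degree ≤ 1
      push_neg at hA
      have hB : ∀ m ∈ p.support, ∀ i : Fin n, (∀ l, l ≠ i → m l = 0) → m i ≤ 1 :=
        fun m hm i hi => Nat.lt_succ_iff.mp (hA m hm i hi)
      have hcs := coeff_single_aux p hone hB
      have hn0 : (0:ℝ) < n := by
        have h3 : (3:ℝ) ≤ n := by exact_mod_cast hn
        linarith
      have hsum : ∑ _i : Fin n, (n:ℝ)⁻¹ = 1 := by
        rw [Finset.sum_const, card_univ, Fintype.card_fin, nsmul_eq_mul]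
        field_simp
      have heval := hone (fun _ => (n:ℝ)⁻¹) hsum
      rw [eval_eq'] at heval
      set t : (Fin n →₀ ℕ) → ℝ := fun m => coeff m p * ∏ i, (n:ℝ)⁻¹ ^ m i with ht
      have htnonneg : ∀ m, 0 ≤ t m := fun m =>
        mul_nonneg (hnonneg m) (Finset.prod_nonneg fun i _ => pow_nonneg (by positivity) _)
      have h0ni : (0 : Fin n →₀ ℕ)
          ∉ Finset.univ.image (fun i : Fin n => Finsupp.single i (1:ℕ)) := by
        simp only [Finset.mem_image, Finset.mem_univ, true_and]
        rintro ⟨i, hi⟩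
        have := Finsupp.single_eq_zero.mp hi
        norm_num at this
      have hmstni : mst ∉ insert 0 (Finset.univ.image fun i : Fin n => Finsupp.single i (1:ℕ)) := by
        simp only [Finset.mem_insert, Finset.mem_image, Finset.mem_univ, true_and]
        rintro (rfl | ⟨i, rfl⟩)
        · simp [Finsupp.sum] at hmstd
        · rw [Finsupp.sum_single_index rfl] at hmstd
          omega
      have hsupS : ∑ m ∈ p.support, t m
          = ∑ m ∈ p.support
            ∪ insert mst (insert 0 (Finset.univ.image fun i : Fin n => Finsupp.single i (1:ℕ))), t m :=
        Finset.sum_subset Finset.subset_union_left (fun m _ hm => by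
          rw [ht]
          simp only
          rw [notMem_support_iff.mp hm, zero_mul])
      have hge : ∑ m ∈ insert mst (insert 0 (Finset.univ.image fun i : Fin n => Finsupp.single i (1:ℕ))), t m
          ≤ ∑ m ∈ p.support
            ∪ insert mst (insert 0 (Finset.univ.image fun i : Fin n => Finsupp.single i (1:ℕ))), t m :=
        Finset.sum_le_sum_of_subset_of_nonneg Finset.subset_union_right
          (fun m _ _ => htnonneg m)
      have hsum_img : ∑ m ∈ Finset.univ.image (fun i : Fin n => Finsupp.single i (1:ℕ)), t m
          = 1 - coeff 0 p := by
        rw [Finset.sum_image (fun a _ b _ h => Finsupp.single_left_injective one_ne_zero h)]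
        have hti : ∀ i : Fin n, t (Finsupp.single i 1) = (1 - coeff 0 p) * (n:ℝ)⁻¹ := by
          intro i
          rw [ht]
          simp only
          rw [prod_pow_eq_pure _ _ i (fun l hl => Finsupp.single_eq_of_ne' (Ne.symm hl)),
            Finsupp.single_eq_same, pow_one]
          have hi := hcs i
          have hci : coeff (Finsupp.single i 1) p = 1 - coeff 0 p := by linarith
          rw [hci]
        rw [Finset.sum_congr rfl fun i _ => hti i, Finset.sum_const, card_univ,
          Fintype.card_fin, nsmul_eq_mul]
        field_simp
      have hS2 : ∑ m ∈ insert mst (insert 0 (Finset.univ.image fun i : Fin n => Finsupp.single i (1:ℕ))), t m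
          = t mst + (t 0 + (1 - coeff 0 p)) := by
        rw [Finset.sum_insert hmstni, Finset.sum_insert h0ni, hsum_img]
      have ht0 : t 0 = coeff 0 p := by rw [ht]; simp
      have htmst : 0 < t mst :=
        mul_pos (lt_of_le_of_ne (hnonneg mst) (Ne.symm (mem_support_iff.1 hmsts)))
          (Finset.prod_pos fun i _ => pow_pos (by positivity) _)
      rw [hsupS] at heval
      have hfin : t mst + (t 0 + (1 - coeff 0 p)) ≤ 1 := by
        rw [← hS2]
        exact hge.trans_eq heval
      rw [ht0] at hfin
      linarith
end

section
/- Let n ≥ 2 and let p ∈ ℝ[x_1,...,x_n] have nonnegative coefficients, degree d ≥ 1, and equal 1 on {x : Σ x_j = 1}. Assume the two-variable bound deg q ≤ 2N(q) - 3 for such polynomials in two variables. If p contains a monomial of degree d involving at most two of the variables, then d ≤ (2N(p) - 3)/(2n - 3). -/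
open MvPolynomial

namespace Stmt15Aux
open Finset


noncomputable def gg (u v : ℝ) (k : ℕ) : ℝ :=
  ∑ j ∈ Finset.range k, (Nat.choose (k + j) (2 * j + 1) : ℝ) * u ^ (2 * j) * v ^ (k - 1 - j)

noncomputable def hh (u v : ℝ) (k : ℕ) : ℝ :=
  ∑ j ∈ Finset.range (k + 1), (Nat.choose (k + j) (2 * j) : ℝ) * u ^ (2 * j) * v ^ (k - j)

lemma gg_succ (u v : ℝ) (k : ℕ) : gg u v (k + 1) = v * gg u v k + hh u v k := by
  unfold gg hh
  have h1 : ∀ j ∈ Finset.range (k + 1),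
      (Nat.choose (k + 1 + j) (2 * j + 1) : ℝ) * u ^ (2 * j) * v ^ (k + 1 - 1 - j)
      = (Nat.choose (k + j) (2 * j + 1) : ℝ) * u ^ (2 * j) * v ^ (k - j)
        + (Nat.choose (k + j) (2 * j) : ℝ) * u ^ (2 * j) * v ^ (k - j) := by
    intro j hj
    have e1 : k + 1 + j = (k + j) + 1 := by ring
    rw [e1, Nat.choose_succ_succ]
    have e2 : k + 1 - 1 - j = k - j := by omega
    rw [e2]
    push_cast
    ring
  rw [Finset.sum_congr rfl h1, Finset.sum_add_distrib]
  congr 1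
  rw [Finset.sum_range_succ]
  have htop : (Nat.choose (k + k) (2 * k + 1) : ℝ) = 0 := by
    rw [Nat.choose_eq_zero_of_lt (by omega)]; norm_cast
  rw [htop, Finset.mul_sum]
  simp only [zero_mul, add_zero]
  apply Finset.sum_congr rfl
  intro j hj
  have hj' : j < k := Finset.mem_range.mp hj
  have e3 : k - j = (k - 1 - j) + 1 := by omega
  rw [e3, pow_succ]
  ring

lemma hh_succ (u v : ℝ) (k : ℕ) :
    hh u v (k + 1) = v * hh u v k + u ^ 2 * gg u v (k + 1) := by
  unfold hh gg
  rw [Finset.sum_range_succ' (fun j => (Nat.choose (k + 1 + j) (2 * j) : ℝ) * u ^ (2 * j) * v ^ (k + 1 - j))]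
  have h1 : ∀ i ∈ Finset.range (k + 1),
      (Nat.choose (k + 1 + (i + 1)) (2 * (i + 1)) : ℝ) * u ^ (2 * (i + 1)) * v ^ (k + 1 - (i + 1))
      = (Nat.choose (k + 1 + i) (2 * i + 1) : ℝ) * u ^ (2 * i + 2) * v ^ (k - i)
        + (Nat.choose (k + 1 + i) (2 * i + 2) : ℝ) * u ^ (2 * i + 2) * v ^ (k - i) := by
    intro i hi
    have e1 : k + 1 + (i + 1) = (k + 1 + i) + 1 := by ring
    have e2 : 2 * (i + 1) = (2 * i + 1) + 1 := by ring
    rw [e1, e2, Nat.choose_succ_succ]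
    have e3 : k + 1 - (i + 1) = k - i := by omega
    have e4 : 2 * i + 1 + 1 = 2 * i + 2 := rfl
    rw [e3, e4]
    push_cast
    ring
  rw [Finset.sum_congr rfl h1, Finset.sum_add_distrib]
  have hrhs : v * ∑ j ∈ Finset.range (k + 1), (Nat.choose (k + j) (2 * j) : ℝ) * u ^ (2 * j) * v ^ (k - j)
      = (∑ i ∈ Finset.range k, (Nat.choose (k + 1 + i) (2 * i + 2) : ℝ) * u ^ (2 * i + 2) * v ^ (k - i))
        + v ^ (k + 1) := by
    rw [Finset.mul_sum, Finset.sum_range_succ' (fun j => v * ((Nat.choose (k + j) (2 * j) : ℝ) * u ^ (2 * j) * v ^ (k - j)))]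
    congr 1
    · apply Finset.sum_congr rfl
      intro i hi
      have hi' : i < k := Finset.mem_range.mp hi
      have e1 : k + (i + 1) = k + 1 + i := by ring
      have e2 : 2 * (i + 1) = 2 * i + 2 := by ring
      have e3 : k - (i + 1) + 1 = k - i := by omega
      rw [e1, e2, ← e3, pow_succ]
      ring
    · simp
      ring
  rw [hrhs]
  have hsecond : (∑ i ∈ Finset.range (k + 1), (Nat.choose (k + 1 + i) (2 * i + 2) : ℝ) * u ^ (2 * i + 2) * v ^ (k - i))
      = ∑ i ∈ Finset.range k, (Nat.choose (k + 1 + i) (2 * i + 2) : ℝ) * u ^ (2 * i + 2) * v ^ (k - i) := by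
    rw [Finset.sum_range_succ]
    have h0 : (Nat.choose (k + 1 + k) (2 * k + 2) : ℝ) = 0 := by
      rw [Nat.choose_eq_zero_of_lt (by omega)]; norm_cast
    rw [h0]; ring
  rw [hsecond]
  have hfirst : (∑ i ∈ Finset.range (k + 1), (Nat.choose (k + 1 + i) (2 * i + 1) : ℝ) * u ^ (2 * i + 2) * v ^ (k - i))
      = u ^ 2 * ∑ j ∈ Finset.range (k + 1), (Nat.choose (k + 1 + j) (2 * j + 1) : ℝ) * u ^ (2 * j) * v ^ (k + 1 - 1 - j) := by
    rw [Finset.mul_sum]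
    apply Finset.sum_congr rfl
    intro i hi
    have e1 : k + 1 - 1 - i = k - i := by omega
    rw [e1]
    ring
  rw [hfirst]
  simp
  ring

lemma aux1 (v : ℝ) (k : ℕ) :
    v * (∑ i ∈ Finset.range k, (v ^ 2) ^ i) + (∑ i ∈ Finset.range (2 * k + 1), (-v) ^ i)
      = ∑ i ∈ Finset.range (k + 1), (v ^ 2) ^ i := by
  induction k with
  | zero => simp
  | succ k ih =>
    have e : 2 * (k + 1) + 1 = 2 * k + 1 + 1 + 1 := by ring
    rw [e]
    simp only [Finset.sum_range_succ]
    have o1 : (-v) ^ (2 * k + 1) = -(v ^ (2 * k + 1)) := Odd.neg_pow ⟨k, by ring⟩ v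
    have o2 : (-v) ^ (2 * k + 1 + 1) = v ^ (2 * k + 2) := by
      rw [Even.neg_pow ⟨k + 1, by ring⟩]
    have o0 : (-v) ^ (2 * k) = v ^ (2 * k) := Even.neg_pow ⟨k, by ring⟩ v
    simp only [Finset.sum_range_succ, o0, o1, o2] at ih ⊢
    linear_combination ih

lemma aux2 (v : ℝ) (k : ℕ) :
    v * (∑ i ∈ Finset.range (2 * k + 1), (-v) ^ i)
      + (1 - v) ^ 2 * (∑ i ∈ Finset.range (k + 1), (v ^ 2) ^ i)
      = ∑ i ∈ Finset.range (2 * (k + 1) + 1), (-v) ^ i := by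
  induction k with
  | zero =>
    simp [Finset.sum_range_succ]
    ring
  | succ k ih =>
    have e1 : 2 * (k + 1) + 1 = 2 * k + 1 + 1 + 1 := by ring
    have e2 : 2 * (k + 1 + 1) + 1 = 2 * k + 1 + 1 + 1 + 1 + 1 := by ring
    rw [e1] at ih ⊢
    rw [e2]
    simp only [Finset.sum_range_succ]
    have o1 : (-v) ^ (2 * k + 1) = -(v ^ (2 * k + 1)) := Odd.neg_pow ⟨k, by ring⟩ v
    have o2 : (-v) ^ (2 * k + 1 + 1) = v ^ (2 * k + 1 + 1) := by
      rw [Even.neg_pow ⟨k + 1, by ring⟩]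
    have o3 : (-v) ^ (2 * k + 1 + 1 + 1) = -(v ^ (2 * k + 1 + 1 + 1)) := by
      rw [Odd.neg_pow ⟨k + 1, by ring⟩]
    have o4 : (-v) ^ (2 * k + 1 + 1 + 1 + 1) = v ^ (2 * k + 1 + 1 + 1 + 1) := by
      rw [Even.neg_pow ⟨k + 2, by ring⟩]
    have o0 : (-v) ^ (2 * k) = v ^ (2 * k) := Even.neg_pow ⟨k, by ring⟩ v
    simp only [Finset.sum_range_succ, o0, o1, o2, o3, o4] at ih ⊢
    linear_combination ih

lemma gg_hh_closed (u v : ℝ) (h : u + v = 1) (k : ℕ) :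
    gg u v k = (∑ i ∈ Finset.range k, (v ^ 2) ^ i)
    ∧ hh u v k = (∑ i ∈ Finset.range (2 * k + 1), (-v) ^ i) := by
  have hu : u = 1 - v := by linarith
  subst hu
  induction k with
  | zero =>
    constructor
    · simp [gg]
    · simp [hh]
  | succ k ih =>
    obtain ⟨ihg, ihh⟩ := ih
    have hg : gg (1 - v) v (k + 1) = ∑ i ∈ Finset.range (k + 1), (v ^ 2) ^ i := by
      rw [gg_succ, ihg, ihh, aux1]
    refine ⟨hg, ?_⟩
    rw [hh_succ, ihh, hg, aux2]

lemma key_identity (u v : ℝ) (h : u + v = 1) (k : ℕ) :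
    u ^ (2 * k + 1) + v ^ (2 * k + 1)
      + ∑ j ∈ Finset.range k,
          ((Nat.choose (k + j) (2 * j + 1) + Nat.choose (k + j + 1) (2 * j + 1) : ℕ) : ℝ)
            * u ^ (2 * j + 1) * v ^ (k - j) = 1 := by
  have hE : ∑ j ∈ Finset.range k,
      ((Nat.choose (k + j) (2 * j + 1) + Nat.choose (k + j + 1) (2 * j + 1) : ℕ) : ℝ)
        * u ^ (2 * j + 1) * v ^ (k - j)
      = u * v * gg u v k + u * (gg u v (k + 1) - u ^ (2 * k)) := by
    have split : ∀ j ∈ Finset.range k,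
        ((Nat.choose (k + j) (2 * j + 1) + Nat.choose (k + j + 1) (2 * j + 1) : ℕ) : ℝ)
          * u ^ (2 * j + 1) * v ^ (k - j)
        = (Nat.choose (k + j) (2 * j + 1) : ℝ) * u ^ (2 * j + 1) * v ^ (k - j)
          + (Nat.choose (k + j + 1) (2 * j + 1) : ℝ) * u ^ (2 * j + 1) * v ^ (k - j) := by
      intro j hj; push_cast; ring
    rw [Finset.sum_congr rfl split, Finset.sum_add_distrib]
    congr 1
    · unfold gg
      rw [Finset.mul_sum]
      apply Finset.sum_congr rfl
      intro j hj
      have hj' : j < k := Finset.mem_range.mp hj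
      have e1 : k - j = (k - 1 - j) + 1 := by omega
      rw [e1, pow_succ, pow_succ]
      ring
    · unfold gg
      rw [Finset.sum_range_succ (fun j => (Nat.choose (k + 1 + j) (2 * j + 1) : ℝ) * u ^ (2 * j) * v ^ (k + 1 - 1 - j)) k]
      have e0 : (Nat.choose (k + 1 + k) (2 * k + 1) : ℝ) = 1 := by
        have e : k + 1 + k = 2 * k + 1 := by ring
        rw [e, Nat.choose_self]; norm_cast
      have e1 : k + 1 - 1 - k = 0 := by omega
      rw [e0, e1]
      simp only [pow_zero, mul_one, one_mul]
      rw [add_sub_cancel_right, Finset.mul_sum]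
      apply Finset.sum_congr rfl
      intro j hj
      have hj' : j < k := Finset.mem_range.mp hj
      have e2 : k + 1 - 1 - j = k - j := by omega
      rw [e2, pow_succ]
      ring
  rw [hE]
  obtain ⟨hgk, -⟩ := gg_hh_closed u v h k
  obtain ⟨hgk1, -⟩ := gg_hh_closed u v h (k + 1)
  rw [hgk, hgk1]
  have hu : u = 1 - v := by linarith
  subst hu
  have hgeo : (∑ i ∈ Finset.range k, (v ^ 2) ^ i) * (v ^ 2 - 1) = (v ^ 2) ^ k - 1 :=
    geom_sum_mul (v ^ 2) k
  rw [Finset.sum_range_succ]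
  linear_combination (-1 : ℝ) * hgeo



def Acn (k : ℕ) (i : Fin (k + 2)) : ℕ :=
  if i.val = 0 then 2 * k + 1 else if i.val = 1 then 0 else 2 * (i.val - 2) + 1

def Bcn (k : ℕ) (i : Fin (k + 2)) : ℕ :=
  if i.val = 0 then 0 else if i.val = 1 then 2 * k + 1 else k - (i.val - 2)

noncomputable def Ccn (k : ℕ) (i : Fin (k + 2)) : ℝ :=
  if i.val ≤ 1 then 1 else
    ((Nat.choose (k + (i.val - 2)) (2 * (i.val - 2) + 1)
      + Nat.choose (k + (i.val - 2) + 1) (2 * (i.val - 2) + 1) : ℕ) : ℝ)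

lemma Ccn_nonneg (k : ℕ) (i : Fin (k + 2)) : 0 ≤ Ccn k i := by
  unfold Ccn; split <;> positivity

lemma sum_Ccn (k : ℕ) (u v : ℝ) (h : u + v = 1) :
    ∑ i : Fin (k + 2), Ccn k i * u ^ Acn k i * v ^ Bcn k i = 1 := by
  rw [Fin.sum_univ_succ, Fin.sum_univ_succ]
  have h0 : Ccn k 0 * u ^ Acn k 0 * v ^ Bcn k 0 = u ^ (2 * k + 1) := by
    simp [Acn, Bcn, Ccn]
  have h1 : Ccn k (Fin.succ 0) * u ^ Acn k (Fin.succ 0) * v ^ Bcn k (Fin.succ 0)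
      = v ^ (2 * k + 1) := by
    simp [Acn, Bcn, Ccn]
  have hstep : ∀ i : Fin k,
      Ccn k i.succ.succ * u ^ Acn k i.succ.succ * v ^ Bcn k i.succ.succ
      = (fun j : ℕ => ((Nat.choose (k + j) (2 * j + 1)
          + Nat.choose (k + j + 1) (2 * j + 1) : ℕ) : ℝ)
            * u ^ (2 * j + 1) * v ^ (k - j)) i.val := by
    intro i
    have hv : (i.succ.succ : Fin (k + 2)).val = i.val + 2 := by simp [Fin.val_succ]
    have c0 : ¬(i.val + 2 = 0) := by omega
    have c1 : ¬(i.val + 2 = 1) := by omega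
    have c2 : ¬(i.val + 2 ≤ 1) := by omega
    simp only [Acn, Bcn, Ccn, hv, if_neg c0, if_neg c1, if_neg c2, Nat.add_sub_cancel]
    try push_cast
    try ring
  rw [h0, h1, Finset.sum_congr rfl (fun i _ => hstep i),
    Fin.sum_univ_eq_sum_range (fun j : ℕ => ((Nat.choose (k + j) (2 * j + 1)
      + Nat.choose (k + j + 1) (2 * j + 1) : ℕ) : ℝ) * u ^ (2 * j + 1) * v ^ (k - j)) k]
  have := key_identity u v h k
  linarith

lemma ABsum (k : ℕ) (i : Fin (k + 2)) (h : i.val ≤ 1) : Acn k i + Bcn k i = 2 * k + 1 := by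
  unfold Acn Bcn
  rcases Nat.le_one_iff_eq_zero_or_eq_one.mp h with h0 | h1
  · simp [h0]
  · simp [h1]

end Stmt15Aux

open Stmt15Aux

theorem stmt_15 (n : ℕ) (hn : 2 ≤ n)
    (h2 : ∀ q : MvPolynomial (Fin 2) ℝ,
      (∀ m, 0 ≤ coeff m q) →
      (∀ x : Fin 2 → ℝ, ∑ i, x i = 1 → eval x q = 1) →
      1 ≤ q.totalDegree →
      (q.totalDegree : ℝ) ≤ 2 * q.support.card - 3)
    (p : MvPolynomial (Fin n) ℝ) (d : ℕ) (hd : 1 ≤ d)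
    (hnonneg : ∀ m, 0 ≤ coeff m p)
    (hdeg : p.totalDegree = d)
    (hone : ∀ x : Fin n → ℝ, ∑ i, x i = 1 → eval x p = 1)
    (hm : ∃ m ∈ p.support, (m.sum fun _ e => e) = d ∧ m.support.card ≤ 2) :
    (d : ℝ) ≤ (2 * p.support.card - 3) / (2 * n - 3) := by
  obtain ⟨k, rfl⟩ : ∃ k, n = k + 2 := ⟨n - 2, by omega⟩
  obtain ⟨m0, hm0p, hm0sum, hm0card⟩ := hm
  obtain ⟨t, hsub, htcard⟩ := Finset.exists_superset_card_eq hm0card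
    (by simp only [Fintype.card_fin]; omega)
  obtain ⟨i0, i1, hne, rfl⟩ := Finset.card_eq_two.mp htcard
  -- the permutation sending i0 ↦ 0, i1 ↦ 1
  set s1 : Equiv.Perm (Fin (k + 2)) := Equiv.swap i0 0 with hs1
  set s2 : Equiv.Perm (Fin (k + 2)) := Equiv.swap (s1 i1) 1 with hs2
  set e : Equiv.Perm (Fin (k + 2)) := s1.trans s2 with hse
  have h01 : (0 : Fin (k + 2)) ≠ 1 := by
    intro h; exact absurd (congrArg Fin.val h) (by simp)
  have he0 : e i0 = 0 := by
    show s2 (s1 i0) = 0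
    rw [hs1, Equiv.swap_apply_left]
    apply Equiv.swap_apply_of_ne_of_ne
    · intro h
      exact hne (s1.injective (by rw [← h, hs1, Equiv.swap_apply_left]))
    · exact h01
  have he1 : e i1 = 1 := by
    show s2 (s1 i1) = 1
    rw [hs2, Equiv.swap_apply_left]
  set A : Fin (k + 2) → ℕ := fun i => Acn k (e i) with hA
  set B : Fin (k + 2) → ℕ := fun i => Bcn k (e i) with hB
  set C : Fin (k + 2) → ℝ := fun i => Ccn k (e i) with hC
  have hsumACB : ∀ u v : ℝ, u + v = 1 →
      ∑ i : Fin (k + 2), C i * u ^ A i * v ^ B i = 1 := by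
    intro u v h
    rw [hA, hB, hC]
    exact (Equiv.sum_comp e (fun i => Ccn k i * u ^ Acn k i * v ^ Bcn k i)).trans
      (sum_Ccn k u v h)
  -- exponent transfer map and coefficients
  set T : (Fin (k + 2) →₀ ℕ) → (Fin 2 →₀ ℕ) := fun m =>
    Finsupp.single 0 (m.sum fun i ex => A i * ex)
      + Finsupp.single 1 (m.sum fun i ex => B i * ex) with hT
  set c : (Fin (k + 2) →₀ ℕ) → ℝ := fun m =>
    coeff m p * m.prod fun i ex => (C i) ^ ex with hc
  set q : MvPolynomial (Fin 2) ℝ := ∑ m ∈ p.support, monomial (T m) (c m) with hq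
  have hc_nonneg : ∀ m, 0 ≤ c m := by
    intro m
    apply mul_nonneg (hnonneg m)
    apply Finset.prod_nonneg
    intro i _
    exact pow_nonneg (Ccn_nonneg k (e i)) _
  have hq_coeff : ∀ μ, coeff μ q = ∑ m ∈ p.support, if T m = μ then c m else 0 := by
    intro μ
    rw [hq, MvPolynomial.coeff_sum]
    exact Finset.sum_congr rfl fun m _ => coeff_monomial μ (T m) (c m)
  have hq_nonneg : ∀ μ, 0 ≤ coeff μ q := by
    intro μ
    rw [hq_coeff μ]
    apply Finset.sum_nonneg
    intro m _
    split
    · exact hc_nonneg m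
    · exact le_refl 0
  -- T m applied
  have hT0 : ∀ m, (T m) 0 = m.sum fun i ex => A i * ex := by
    intro m
    rw [hT]
    simp [Finsupp.single_apply]
  have hT1 : ∀ m, (T m) 1 = m.sum fun i ex => B i * ex := by
    intro m
    rw [hT]
    simp [Finsupp.single_apply]
  -- evaluation
  have hq_eval : ∀ x : Fin 2 → ℝ, x 0 + x 1 = 1 → eval x q = 1 := by
    intro x hx
    set y : Fin (k + 2) → ℝ := fun i => C i * (x 0) ^ A i * (x 1) ^ B i with hy
    have hy1 : ∑ i, y i = 1 := hsumACB (x 0) (x 1) hx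
    have heq : eval x q = eval y p := by
      rw [hq, map_sum, MvPolynomial.eval_eq y p]
      apply Finset.sum_congr rfl
      intro m hmm
      rw [eval_monomial, Finsupp.prod_fintype _ _ (fun i => pow_zero _), Fin.prod_univ_two,
        hT0, hT1, hc]
      have hprod : ∏ i ∈ m.support, y i ^ m i
          = (m.prod fun i ex => (C i) ^ ex)
            * (x 0) ^ (m.sum fun i ex => A i * ex) * (x 1) ^ (m.sum fun i ex => B i * ex) := by
        rw [Finsupp.prod, Finsupp.sum, Finsupp.sum,
          ← Finset.prod_pow_eq_pow_sum m.support (fun i => A i * m i) (x 0),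
          ← Finset.prod_pow_eq_pow_sum m.support (fun i => B i * m i) (x 1)]
        rw [← Finset.prod_mul_distrib, ← Finset.prod_mul_distrib]
        apply Finset.prod_congr rfl
        intro i _
        rw [hy]
        rw [mul_pow, mul_pow, pow_mul, pow_mul]
      rw [hprod]
      ring
    rw [heq]
    exact hone y hy1
  -- support card bound
  have hsupp : q.support ⊆ p.support.image T := by
    intro μ hμ
    rw [MvPolynomial.mem_support_iff, hq_coeff μ] at hμ
    by_contra hcon
    apply hμ
    apply Finset.sum_eq_zero
    intro m hmm
    rw [if_neg]
    intro hTm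
    exact hcon (Finset.mem_image.mpr ⟨m, hmm, hTm⟩)
  have hcard : q.support.card ≤ p.support.card :=
    le_trans (Finset.card_le_card hsupp) (Finset.card_image_le)
  -- the distinguished monomial survives
  have hCone : ∀ i ∈ m0.support, C i = 1 := by
    intro i hi
    have := hsub hi
    rw [Finset.mem_insert, Finset.mem_singleton] at this
    rcases this with h | h
    · subst h; rw [hC]; simp only [he0]; simp [Ccn]
    · subst h; rw [hC]; simp only [he1]; simp [Ccn]
  have hcm0 : c m0 = coeff m0 p := by
    simp only [hc]
    have : (m0.prod fun i ex => (C i) ^ ex) = 1 := by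
      apply Finset.prod_eq_one
      intro i hi
      show C i ^ m0 i = 1
      rw [hCone i hi, one_pow]
    rw [this, mul_one]
  have hcm0pos : 0 < c m0 := by
    rw [hcm0]
    exact lt_of_le_of_ne (hnonneg m0) (Ne.symm (MvPolynomial.mem_support_iff.mp hm0p))
  have hpos : 0 < coeff (T m0) q := by
    rw [hq_coeff (T m0)]
    have hle : c m0 ≤ ∑ m ∈ p.support, if T m = T m0 then c m else 0 := by
      have := Finset.single_le_sum (f := fun m => if T m = T m0 then c m else 0)
        (fun m _ => by split; exacts [hc_nonneg m, le_refl 0]) hm0p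
      simpa using this
    linarith
  have hTmem : T m0 ∈ q.support := MvPolynomial.mem_support_iff.mpr (ne_of_gt hpos)
  have hdegq : (2 * k + 1) * d ≤ q.totalDegree := by
    have hle := MvPolynomial.le_totalDegree hTmem
    have hsum : ((T m0).sum fun _ ex => ex)
        = (m0.sum fun i ex => A i * ex) + (m0.sum fun i ex => B i * ex) := by
      rw [hT]
      rw [Finsupp.sum_add_index' (fun a => rfl) (fun a b₁ b₂ => rfl),
        Finsupp.sum_single_index rfl, Finsupp.sum_single_index rfl]
    have hAB : (m0.sum fun i ex => A i * ex) + (m0.sum fun i ex => B i * ex)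
        = (2 * k + 1) * d := by
      rw [← hm0sum, Finsupp.sum, Finsupp.sum, Finsupp.sum, ← Finset.sum_add_distrib,
        Finset.mul_sum]
      apply Finset.sum_congr rfl
      intro i hi
      have hD : A i + B i = 2 * k + 1 := by
        have := hsub hi
        rw [Finset.mem_insert, Finset.mem_singleton] at this
        rcases this with h | h
        · subst h; rw [hA, hB]; simp only [he0]; exact ABsum k 0 (by simp)
        · subst h; rw [hA, hB]; simp only [he1]; exact ABsum k 1 (by simp)
      rw [← add_mul, hD]
    rw [hsum, hAB] at hle
    exact hle
  have hq1 : 1 ≤ q.totalDegree := by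
    have : 1 ≤ (2 * k + 1) * d := Nat.one_le_iff_ne_zero.mpr (by positivity)
    omega
  have hmain := h2 q hq_nonneg
    (fun x hx => hq_eval x (by rwa [Fin.sum_univ_two] at hx)) hq1
  have hc1 : (((2 * k + 1) * d : ℕ) : ℝ) ≤ 2 * q.support.card - 3 :=
    le_trans (Nat.cast_le.mpr hdegq) hmain
  have hc2 : (q.support.card : ℝ) ≤ (p.support.card : ℝ) := Nat.cast_le.mpr hcard
  have hposD : (0 : ℝ) < 2 * ((k : ℝ) + 2) - 3 := by linarith [Nat.cast_nonneg (α := ℝ) k]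
  rw [show ((k + 2 : ℕ) : ℝ) = (k : ℝ) + 2 by push_cast; ring, le_div_iff₀ hposD]
  push_cast at hc1 ⊢
  nlinarith [hc1, hc2]
end

section
/- Let p ∈ ℝ[x,y] have nonnegative coefficients, degree d ≥ 1, equal 1 on {x+y=1}, and be affine in y: p(x,y) = a(x) + y·b(x). Then N(p) ≥ d + 1; the monomial x^d appears in p, and x^j y appears for every 0 ≤ j ≤ d-1. Moreover N(p) = d + 1 if and only if p(x,y) = x^d + y(x^{d-1} + x^{d-2} + ... + x + 1). -/
open MvPolynomial

namespace Stmt17Aux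

noncomputable def mu (j i : ℕ) : Fin 2 →₀ ℕ :=
  Finsupp.single 0 j + Finsupp.single 1 i

lemma mu_apply0 (j i : ℕ) : mu j i 0 = j := by
  simp [mu, Finsupp.single_apply]

lemma mu_apply1 (j i : ℕ) : mu j i 1 = i := by
  simp [mu, Finsupp.single_apply]

lemma mu_inj {j i j' i' : ℕ} (h : mu j i = mu j' i') : j = j' ∧ i = i' := by
  constructor
  · have := DFunLike.congr_fun h (0 : Fin 2)
    simpa [mu_apply0] using this
  · have := DFunLike.congr_fun h (1 : Fin 2)
    simpa [mu_apply1] using this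

lemma eq_mu (m : Fin 2 →₀ ℕ) : m = mu (m 0) (m 1) := by
  ext i
  fin_cases i
  · simp [mu_apply0]
  · simp [mu_apply1]

lemma mu_zero (j : ℕ) : mu j 0 = Finsupp.single 0 j := by
  simp [mu]

lemma mu_sum (j i : ℕ) : ((mu j i).sum fun _ e => e) = j + i := by
  unfold mu
  rw [Finsupp.sum_add_index' (fun _ => rfl) (fun _ _ _ => rfl),
    Finsupp.sum_single_index rfl, Finsupp.sum_single_index rfl]

lemma mu_prod {M : Type*} [CommMonoid M] (g : Fin 2 → M) (j i : ℕ) :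
    ((mu j i).prod fun n e => g n ^ e) = g 0 ^ j * g 1 ^ i := by
  unfold mu
  rw [Finsupp.prod_add_index' (fun _ => pow_zero _) (fun _ _ _ => pow_add _ _ _)]
  rw [Finsupp.prod_single_index, Finsupp.prod_single_index] <;> exact pow_zero _

lemma sum_fin2 (m : Fin 2 →₀ ℕ) : (m.sum fun _ n => n) = m 0 + m 1 := by
  conv_lhs => rw [eq_mu m]
  rw [mu_sum]

end Stmt17Aux

open Stmt17Aux

theorem stmt_17 (d : ℕ) (hd : 1 ≤ d)
    (p : MvPolynomial (Fin 2) ℝ)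
    (hnonneg : ∀ m, 0 ≤ coeff m p)
    (hdeg : p.totalDegree = d)
    (hone : ∀ x : Fin 2 → ℝ, ∑ i, x i = 1 → eval x p = 1)
    (haffine : ∀ m ∈ p.support, m 1 ≤ 1) :
    d + 1 ≤ p.support.card ∧
    Finsupp.single 0 d ∈ p.support ∧
    (∀ j, j ≤ d - 1 → Finsupp.single 0 j + Finsupp.single 1 1 ∈ p.support) ∧
    (p.support.card = d + 1 ↔
      p = X 0 ^ d + X 1 * ∑ j ∈ Finset.range d, X 0 ^ j) := by
  classical
  obtain ⟨e, rfl⟩ : ∃ e, d = e + 1 := ⟨d - 1, by omega⟩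
  set a : ℕ → ℝ := fun j => coeff (mu j 0) p with ha
  set b : ℕ → ℝ := fun j => coeff (mu j 1) p with hb
  -- degree bounds
  have hdegm : ∀ j i : ℕ, coeff (mu j i) p ≠ 0 → j + i ≤ e + 1 := by
    intro j i h
    have hm : mu j i ∈ p.support := mem_support_iff.mpr h
    have h2 := MvPolynomial.le_totalDegree hm
    rwa [hdeg, mu_sum] at h2
  have hbd : ∀ j, e + 1 ≤ j → b j = 0 := by
    intro j hj
    by_contra h0
    have := hdegm j 1 h0
    omega
  have had0 : ∀ j, e + 1 < j → a j = 0 := by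
    intro j hj
    by_contra h0
    have := hdegm j 0 h0
    omega
  -- representation of p
  have hrep : p = (∑ j ∈ Finset.range (e + 2), monomial (mu j 0) (a j)) +
      (∑ j ∈ Finset.range (e + 2), monomial (mu j 1) (b j)) := by
    apply MvPolynomial.ext
    intro m
    rw [coeff_add, MvPolynomial.coeff_sum, MvPolynomial.coeff_sum]
    simp only [coeff_monomial]
    have hm := eq_mu m
    rcases hi : m 1 with _ | _ | i2
    · -- m 1 = 0
      rw [hi] at hm
      have h1 : ∀ j ∈ Finset.range (e + 2), (if mu j 1 = m then b j else 0) = 0 := by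
        intro j _
        rw [if_neg]
        intro hh
        rw [hm] at hh
        exact absurd (mu_inj hh).2 (by omega)
      rw [Finset.sum_congr rfl h1, Finset.sum_const_zero, add_zero]
      have h2 : ∀ j, (mu j 0 = m) ↔ j = m 0 := by
        intro j
        constructor
        · intro hh; rw [hm] at hh; exact (mu_inj hh).1
        · intro hh; rw [hh, ← hm]
      simp only [h2]
      rw [Finset.sum_ite_eq' (Finset.range (e + 2)) (m 0) a]
      by_cases hc : m 0 ∈ Finset.range (e + 2)
      · rw [if_pos hc]
        conv_lhs => rw [hm]
      · rw [if_neg hc]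
        rw [Finset.mem_range] at hc
        conv_lhs => rw [hm]
        exact had0 _ (by omega)
    · -- m 1 = 1
      rw [hi] at hm
      have h1 : ∀ j ∈ Finset.range (e + 2), (if mu j 0 = m then a j else 0) = 0 := by
        intro j _
        rw [if_neg]
        intro hh
        rw [hm] at hh
        exact absurd (mu_inj hh).2 (by omega)
      rw [Finset.sum_congr rfl h1, Finset.sum_const_zero, zero_add]
      have h2 : ∀ j, (mu j 1 = m) ↔ j = m 0 := by
        intro j
        constructor
        · intro hh; rw [hm] at hh; exact (mu_inj hh).1
        · intro hh; rw [hh, ← hm]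
      simp only [h2]
      rw [Finset.sum_ite_eq' (Finset.range (e + 2)) (m 0) b]
      by_cases hc : m 0 ∈ Finset.range (e + 2)
      · rw [if_pos hc]
        conv_lhs => rw [hm]
      · rw [if_neg hc]
        rw [Finset.mem_range] at hc
        conv_lhs => rw [hm]
        exact hbd _ (by omega)
    · -- m 1 ≥ 2
      have hns : m ∉ p.support := by
        intro hmem
        have := haffine m hmem
        omega
      rw [notMem_support_iff] at hns
      rw [hns]
      have h1 : ∀ j ∈ Finset.range (e + 2), (if mu j 0 = m then a j else 0) = 0 := by
        intro j _
        rw [if_neg]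
        intro hh
        have := DFunLike.congr_fun hh (1 : Fin 2)
        rw [mu_apply1, hi] at this
        omega
      have h2 : ∀ j ∈ Finset.range (e + 2), (if mu j 1 = m then b j else 0) = 0 := by
        intro j _
        rw [if_neg]
        intro hh
        have := DFunLike.congr_fun hh (1 : Fin 2)
        rw [mu_apply1, hi] at this
        omega
      rw [Finset.sum_congr rfl h1, Finset.sum_congr rfl h2, Finset.sum_const_zero, add_zero]
  -- one-variable polynomial identity
  set g : Fin 2 → Polynomial ℝ := ![Polynomial.X, 1 - Polynomial.X] with hg
  have hkey : ∀ (t : ℝ) (q : MvPolynomial (Fin 2) ℝ),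
      Polynomial.eval t (aeval g q) = eval ![t, 1 - t] q := by
    intro t q
    induction q using MvPolynomial.induction_on with
    | C r => simp
    | add q r hq hr => simp [hq, hr]
    | mul_X q i hq =>
      fin_cases i <;> simp [hq, hg] <;> exact Or.inl hq
  have hq1 : (aeval g p : Polynomial ℝ) = 1 := by
    apply Polynomial.funext
    intro t
    rw [hkey t p, Polynomial.eval_one]
    apply hone
    rw [Fin.sum_univ_two]
    simp
  set A : Polynomial ℝ := ∑ j ∈ Finset.range (e + 2), Polynomial.C (a j) * Polynomial.X ^ j with hA
  set B : Polynomial ℝ := ∑ j ∈ Finset.range (e + 2), Polynomial.C (b j) * Polynomial.X ^ j with hB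
  have hrw : (aeval g) p = A + B * (1 - Polynomial.X) := by
    conv_lhs => rw [hrep]
    rw [map_add, map_sum, map_sum]
    congr 1
    · rw [hA]
      apply Finset.sum_congr rfl
      intro j _
      rw [aeval_monomial, mu_prod]
      simp only [hg, Matrix.cons_val_zero, Matrix.cons_val_one, Matrix.head_cons,
        Polynomial.algebraMap_eq, pow_zero, mul_one]
    · rw [hB, Finset.sum_mul]
      apply Finset.sum_congr rfl
      intro j _
      rw [aeval_monomial, mu_prod]
      simp only [hg, Matrix.cons_val_zero, Matrix.cons_val_one, Matrix.head_cons,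
        Polynomial.algebraMap_eq, pow_one]
      ring
  have hqAB : A + B * (1 - Polynomial.X) = 1 := by rw [← hrw, hq1]
  rw [mul_one_sub] at hqAB
  have hco : ∀ k, A.coeff k + (B.coeff k - (B * Polynomial.X).coeff k)
      = (1 : Polynomial ℝ).coeff k := by
    intro k
    conv_rhs => rw [← hqAB]
    simp [Polynomial.coeff_add, Polynomial.coeff_sub]
  have hAco : ∀ k, A.coeff k = if k < e + 2 then a k else 0 := by
    intro k
    rw [hA, Polynomial.finset_sum_coeff]
    simp only [Polynomial.coeff_C_mul, Polynomial.coeff_X_pow, mul_ite, mul_one, mul_zero]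
    rw [Finset.sum_ite_eq (Finset.range (e + 2)) k a]
    simp [Finset.mem_range]
  have hBco : ∀ k, B.coeff k = if k < e + 2 then b k else 0 := by
    intro k
    rw [hB, Polynomial.finset_sum_coeff]
    simp only [Polynomial.coeff_C_mul, Polynomial.coeff_X_pow, mul_ite, mul_one, mul_zero]
    rw [Finset.sum_ite_eq (Finset.range (e + 2)) k b]
    simp [Finset.mem_range]
  have r0 : a 0 + b 0 = 1 := by
    have h := hco 0
    rw [hAco 0, hBco 0, Polynomial.coeff_mul_X_zero, Polynomial.coeff_one] at h
    simp only [if_pos (by omega : (0:ℕ) < e + 2), if_pos rfl, sub_zero] at h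
    exact h
  have rk : ∀ k, k < e + 1 → a (k + 1) + b (k + 1) = b k := by
    intro k hk
    have h := hco (k + 1)
    rw [hAco (k + 1), Polynomial.coeff_mul_X, hBco (k + 1), hBco k, Polynomial.coeff_one] at h
    rw [if_pos (by omega : k + 1 < e + 2), if_pos (by omega : k + 1 < e + 2),
      if_pos (by omega : k < e + 2), if_neg (by omega : ¬ (k + 1 = 0))] at h
    linarith
  have hbe1 : b (e + 1) = 0 := hbd (e + 1) le_rfl
  have hade : a (e + 1) = b e := by
    have h := rk e (by omega)
    rw [hbe1] at h
    linarith
  -- top degree monomial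
  have hp0 : p ≠ 0 := by
    intro h
    rw [h, totalDegree_zero] at hdeg
    omega
  obtain ⟨m, hmem, hsup⟩ := Finset.exists_mem_eq_sup p.support
    (MvPolynomial.support_nonempty.mpr hp0) (fun m => m.sum fun _ n => n)
  have hsum : m 0 + m 1 = e + 1 := by
    have h3 : p.totalDegree = (m.sum fun _ n => n) := hsup
    rw [hdeg] at h3
    rw [← sum_fin2 m]
    exact h3.symm
  have hm1 := haffine m hmem
  have hcm : coeff m p ≠ 0 := mem_support_iff.mp hmem
  have hbepos : (0 : ℝ) < b e := by
    have hne : b e ≠ 0 := by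
      have hcase : m 1 = 0 ∨ m 1 = 1 := by omega
      rcases hcase with hcase | hcase
      · have hm0 : m 0 = e + 1 := by omega
        have h5 : coeff m p = a (e + 1) := by
          conv_lhs => rw [eq_mu m, hcase, hm0]
        rw [h5, hade] at hcm
        exact hcm
      · have hm0 : m 0 = e := by omega
        have h5 : coeff m p = b e := by
          conv_lhs => rw [eq_mu m, hcase, hm0]
        rw [h5] at hcm
        exact hcm
    exact lt_of_le_of_ne (hnonneg _) (Ne.symm hne)
  have hchain : ∀ n k, k + n = e → b e ≤ b k := by
    intro n
    induction n with
    | zero =>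
      intro k hk
      rw [show k = e from by omega]
    | succ n ih =>
      intro k hk
      have h1 : b e ≤ b (k + 1) := ih (k + 1) (by omega)
      have h2 := rk k (by omega)
      have h3 : (0 : ℝ) ≤ a (k + 1) := hnonneg _
      linarith
  have hbpos : ∀ k, k ≤ e → (0 : ℝ) < b k :=
    fun k hk => lt_of_lt_of_le hbepos (hchain (e - k) k (by omega))
  have hapos : (0 : ℝ) < a (e + 1) := by rw [hade]; exact hbepos
  have hmem_a : mu (e + 1) 0 ∈ p.support := mem_support_iff.mpr (ne_of_gt hapos)
  have hmem_b : ∀ k, k ≤ e → mu k 1 ∈ p.support :=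
    fun k hk => mem_support_iff.mpr (ne_of_gt (hbpos k hk))
  set S : Finset (Fin 2 →₀ ℕ) :=
    insert (mu (e + 1) 0) ((Finset.range (e + 1)).image fun j => mu j 1) with hS
  have hnotmem : mu (e + 1) 0 ∉ (Finset.range (e + 1)).image fun j => mu j 1 := by
    simp only [Finset.mem_image, Finset.mem_range]
    rintro ⟨j, hj, hjeq⟩
    exact absurd (mu_inj hjeq).2 (by omega)
  have hScard : S.card = e + 2 := by
    rw [hS, Finset.card_insert_of_notMem hnotmem,
      Finset.card_image_of_injective _ (fun x y h => (mu_inj h).1), Finset.card_range]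
  have hSsub : S ⊆ p.support := by
    intro m hm
    rw [hS, Finset.mem_insert] at hm
    rcases hm with rfl | hm
    · exact hmem_a
    · obtain ⟨j, hj, rfl⟩ := Finset.mem_image.mp hm
      rw [Finset.mem_range] at hj
      exact hmem_b j (by omega)
  have htgt : (X 0 : MvPolynomial (Fin 2) ℝ) ^ (e + 1)
        + X 1 * ∑ j ∈ Finset.range (e + 1), X 0 ^ j
      = monomial (mu (e + 1) 0) 1 + ∑ j ∈ Finset.range (e + 1), monomial (mu j 1) 1 := by
    rw [Finset.mul_sum]
    congr 1
    · rw [X_pow_eq_monomial, mu_zero]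
    · apply Finset.sum_congr rfl
      intro j _
      rw [← pow_one (X 1), X_pow_eq_monomial, X_pow_eq_monomial, monomial_mul, mul_one]
      rw [show Finsupp.single 1 1 + Finsupp.single 0 j = mu j 1 from add_comm _ _]
  refine ⟨?_, ?_, ?_, ?_⟩
  · have := Finset.card_le_card hSsub
    omega
  · rw [← mu_zero]
    exact hmem_a
  · intro j hj
    exact hmem_b j (by omega)
  · constructor
    · intro hcard
      have hSeq : S = p.support := Finset.eq_of_subset_of_card_le hSsub (by omega)
      have hmemS : ∀ m, coeff m p ≠ 0 → m ∈ S := by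
        intro m hm
        rw [hSeq]
        exact mem_support_iff.mpr hm
      have haj : ∀ j, j ≠ e + 1 → a j = 0 := by
        intro j hj
        by_contra h0
        have hx := hmemS (mu j 0) h0
        rw [hS, Finset.mem_insert] at hx
        rcases hx with h | h
        · exact hj (mu_inj h).1
        · obtain ⟨i, _, hieq⟩ := Finset.mem_image.mp h
          exact absurd (mu_inj hieq).2 (by omega)
      have hb1 : ∀ k, k ≤ e → b k = 1 := by
        intro k
        induction k with
        | zero =>
          intro _
          have h0 := haj 0 (by omega)
          linarith
        | succ n ih =>
          intro hn
          have h1 := rk n (by omega)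
          have h2 := haj (n + 1) (by omega)
          have h3 := ih (by omega)
          linarith
      have ha1 : a (e + 1) = 1 := by rw [hade]; exact hb1 e le_rfl
      rw [hrep, htgt]
      congr 1
      · rw [Finset.sum_eq_single_of_mem (e + 1) (by simp), ha1]
        intro j hj hne
        rw [haj j hne, monomial_zero]
      · rw [Finset.sum_range_succ, hbe1, monomial_zero, add_zero]
        apply Finset.sum_congr rfl
        intro j hj
        rw [Finset.mem_range] at hj
        rw [hb1 j (by omega)]
    · intro hpeq
      have hsub2 : p.support ⊆ S := by
        intro m hm
        have hc : coeff m p ≠ 0 := mem_support_iff.mp hm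
        rw [hpeq, htgt] at hc
        by_contra hns
        apply hc
        have hz1 : (if mu (e + 1) 0 = m then (1:ℝ) else 0) = 0 := by
          rw [if_neg]
          intro hh
          exact hns (by rw [hS, ← hh]; exact Finset.mem_insert_self _ _)
        have hz2 : ∀ j ∈ Finset.range (e + 1), coeff m (monomial (mu j 1) (1:ℝ)) = 0 := by
          intro j hj
          rw [coeff_monomial, if_neg]
          intro hh
          apply hns
          rw [hS, Finset.mem_insert]
          right
          exact Finset.mem_image.mpr ⟨j, hj, hh⟩
        rw [coeff_add, coeff_monomial, MvPolynomial.coeff_sum, hz1,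
          Finset.sum_eq_zero hz2, add_zero]
      have hfin : p.support = S := Finset.Subset.antisymm hsub2 hSsub
      rw [hfin, hScard]
end

section
/- Let p ∈ ℝ[x_1,x_2,x_3] have nonnegative coefficients, degree d, equal 1 on {x_1+x_2+x_3 = 1}, and be affine in x_3: p = a(x_1,x_2) + x_3·b(x_1,x_2). If two monomials m_1(x_1,x_2) and m_2(x_1,x_2) of degree d occur in p with δ(m_1,m_2) ≥ 4, then p has at least d + 1 distinct monomials that depend on x_3. -/
open MvPolynomial

private lemma aux_degSum (n : Fin 3 →₀ ℕ) : (n.sum fun _ e => e) = n 0 + n 1 + n 2 := by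
  rw [Finsupp.sum_fintype _ _ (fun _ => rfl), Fin.sum_univ_three]

theorem stmt_19 (d : ℕ)
    (p : MvPolynomial (Fin 3) ℝ)
    (hnonneg : ∀ m, 0 ≤ coeff m p)
    (hdeg : p.totalDegree = d)
    (hone : ∀ x : Fin 3 → ℝ, ∑ i, x i = 1 → eval x p = 1)
    (haffine : ∀ m ∈ p.support, m 2 ≤ 1)
    (m₁ m₂ : Fin 3 →₀ ℕ)
    (hm₁ : m₁ ∈ p.support) (hm₂ : m₂ ∈ p.support)
    (hm₁z : m₁ 2 = 0) (hm₂z : m₂ 2 = 0)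
    (hd₁ : (m₁.sum fun _ e => e) = d) (hd₂ : (m₂.sum fun _ e => e) = d)
    (hδ : 4 ≤ ∑ j, ((m₁ j : ℤ) - (m₂ j : ℤ)).natAbs) :
    d + 1 ≤ (p.support.filter fun m => m 2 ≠ 0).card := by
  classical
  rw [aux_degSum, hm₁z] at hd₁
  rw [aux_degSum, hm₂z] at hd₂
  rw [Fin.sum_univ_three] at hδ
  have hgap : m₁ 0 + 2 ≤ m₂ 0 ∨ m₂ 0 + 2 ≤ m₁ 0 := by omega
  have hd2 : 2 ≤ d := by omega
  set e0 : Fin 3 →₀ ℕ := Finsupp.single 0 1 with he0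
  set e1 : Fin 3 →₀ ℕ := Finsupp.single 1 1 with he1
  set e2 : Fin 3 →₀ ℕ := Finsupp.single 2 1 with he2
  set b : MvPolynomial (Fin 3) ℝ :=
    ∑ m ∈ p.support.filter (fun m => m 2 ≠ 0), monomial (m - e2) (coeff m p) with hbdef
  have hb_coeff : ∀ n : Fin 3 →₀ ℕ, n 2 = 0 → coeff n b = coeff (n + e2) p := by
    intro n hn
    rw [hbdef, coeff_sum]
    have h1 : ∀ m ∈ p.support.filter (fun m => m 2 ≠ 0),
        coeff n (monomial (m - e2) (coeff m p)) = if m = n + e2 then coeff m p else 0 := by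
      intro m hm
      rw [Finset.mem_filter] at hm
      have hm2 : m 2 = 1 := le_antisymm (haffine m hm.1) (Nat.one_le_iff_ne_zero.mpr hm.2)
      rw [coeff_monomial]
      congr 1
      apply propext
      constructor
      · intro h
        ext i
        have h2 := DFunLike.congr_fun h i
        rw [Finsupp.tsub_apply] at h2
        rw [Finsupp.add_apply]
        have he : ∀ j : Fin 3, e2 j = if (2:Fin 3) = j then 1 else 0 := fun j => by
          rw [he2, Finsupp.single_apply]
        rw [he i] at h2 ⊢
        fin_cases i <;> simp_all <;> omega
      · intro h
        subst h
        ext i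
        rw [Finsupp.tsub_apply, Finsupp.add_apply]
        have : e2 i ≤ n i + e2 i := by omega
        omega
    rw [Finset.sum_congr rfl h1, Finset.sum_ite_eq' _ (n + e2) (fun m => coeff m p)]
    split_ifs with h
    · rfl
    · rw [Finset.mem_filter] at h
      push_neg at h
      by_cases hmem : n + e2 ∈ p.support
      · exfalso
        have hne : (n + e2) 2 ≠ 0 := by
          rw [Finsupp.add_apply, hn, he2, Finsupp.single_apply]; simp
        exact hne (h hmem)
      · rw [notMem_support_iff] at hmem; rw [hmem]
  have hb_coeff0 : ∀ n : Fin 3 →₀ ℕ, n 2 ≠ 0 → coeff n b = 0 := by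
    intro n hn
    rw [hbdef, coeff_sum]
    refine Finset.sum_eq_zero fun m hm => ?_
    rw [Finset.mem_filter] at hm
    have hm2 : m 2 = 1 := le_antisymm (haffine m hm.1) (Nat.one_le_iff_ne_zero.mpr hm.2)
    rw [coeff_monomial, if_neg]
    intro h
    apply hn
    rw [← h, Finsupp.tsub_apply]
    have he : e2 2 = 1 := by rw [he2, Finsupp.single_apply]; simp
    omega
  have hb_nonneg : ∀ n, 0 ≤ coeff n b := by
    intro n
    by_cases hn : n 2 = 0
    · rw [hb_coeff n hn]; exact hnonneg _
    · rw [hb_coeff0 n hn]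
  have hb_supp2 : ∀ n ∈ b.support, n 2 = 0 := by
    intro n hn
    by_contra h
    exact (mem_support_iff.mp hn) (hb_coeff0 n h)
  have hbdeg : ∀ n ∈ b.support, n 0 + n 1 + n 2 + 1 ≤ d := by
    intro n hn
    have h2 : n 2 = 0 := hb_supp2 n hn
    have hps : n + e2 ∈ p.support := by
      rw [mem_support_iff, ← hb_coeff n h2]
      exact mem_support_iff.mp hn
    have hle := le_totalDegree hps
    rw [hdeg] at hle
    rw [Finsupp.sum_fintype _ _ (fun _ => rfl), Fin.sum_univ_three] at hle
    have h0 : (n + e2) 0 = n 0 := by rw [Finsupp.add_apply, he2, Finsupp.single_apply]; simp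
    have h1 : (n + e2) 1 = n 1 := by rw [Finsupp.add_apply, he2, Finsupp.single_apply]; simp
    have h22 : (n + e2) 2 = n 2 + 1 := by rw [Finsupp.add_apply, he2, Finsupp.single_apply]; simp
    omega
  set a : MvPolynomial (Fin 3) ℝ := p - X 2 * b with hadef
  have ha_coeff : ∀ n : Fin 3 →₀ ℕ, n 2 = 0 → coeff n a = coeff n p := by
    intro n hn
    rw [hadef, coeff_sub, mul_comm (X 2) b, coeff_mul_X', if_neg, sub_zero]
    rw [Finsupp.mem_support_iff]
    simpa using hn
  have ha_coeff0 : ∀ n : Fin 3 →₀ ℕ, n 2 ≠ 0 → coeff n a = 0 := by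
    intro n hn
    rw [hadef, coeff_sub, mul_comm (X 2) b, coeff_mul_X', if_pos (Finsupp.mem_support_iff.mpr hn)]
    have he : e2 2 = 1 := by rw [he2, Finsupp.single_apply]; simp
    by_cases h1 : n 2 = 1
    · have hsub : (n - e2) 2 = 0 := by rw [Finsupp.tsub_apply]; omega
      rw [hb_coeff _ hsub]
      have heq : n - e2 + e2 = n := by
        ext i
        rw [Finsupp.add_apply, Finsupp.tsub_apply]
        have : e2 i ≤ n i := by
          rw [he2, Finsupp.single_apply]
          split_ifs with h
          · rw [← h]; omega
          · omega
        omega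
      rw [heq, sub_self]
    · have hnp : coeff n p = 0 := by
        rw [← notMem_support_iff]
        intro h
        have := haffine n h
        omega
      have hnb : coeff (n - e2) b = 0 := by
        apply hb_coeff0
        rw [Finsupp.tsub_apply]
        omega
      rw [hnp, hnb, sub_zero]
  have ha_nonneg : ∀ n, 0 ≤ coeff n a := by
    intro n
    by_cases hn : n 2 = 0
    · rw [ha_coeff n hn]
      exact hnonneg _
    · rw [ha_coeff0 n hn]
  have hp_eq : p = a + X 2 * b := by rw [hadef]; ring
  have key : a + (1 - X 0 - X 1) * b = 1 := by
    apply MvPolynomial.funext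
    intro x
    set y : Fin 3 → ℝ := fun i => if i = 2 then 1 - x 0 - x 1 else x i with hy
    have hy0 : y 0 = x 0 := by simp [hy]
    have hy1 : y 1 = x 1 := by simp [hy]
    have hy2 : y 2 = 1 - x 0 - x 1 := by simp [hy]
    have hysum : ∑ i, y i = 1 := by
      rw [Fin.sum_univ_three, hy0, hy1, hy2]; ring
    have heval : ∀ f : MvPolynomial (Fin 3) ℝ, (∀ n : Fin 3 →₀ ℕ, n 2 ≠ 0 → coeff n f = 0) →
        eval y f = eval x f := by
      intro f hf
      rw [eval_eq', eval_eq']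
      refine Finset.sum_congr rfl fun m hm => ?_
      have h2 : m 2 = 0 := by
        by_contra h
        exact (mem_support_iff.mp hm) (hf m h)
      congr 1
      rw [Fin.prod_univ_three, Fin.prod_univ_three, h2, hy0, hy1, pow_zero, pow_zero]
    have hyp := hone y hysum
    rw [hp_eq] at hyp
    simp only [map_add, map_mul, eval_X] at hyp
    rw [heval a ha_coeff0, heval b hb_coeff0] at hyp
    rw [hy2] at hyp
    simp only [map_add, map_mul, map_sub, map_one, eval_X]
    rw [hyp]
  -- coefficient recursion
  have hrec : ∀ n : Fin 3 →₀ ℕ, n ≠ 0 →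
      coeff n a + coeff n b =
        (if 0 ∈ n.support then coeff (n - e0) b else 0) +
        (if 1 ∈ n.support then coeff (n - e1) b else 0) := by
    intro n hn
    have h := congrArg (coeff n) key
    have hexp : a + (1 - X 0 - X 1) * b = a + b - b * X 0 - b * X 1 := by ring
    rw [hexp, coeff_sub, coeff_sub, coeff_add, coeff_mul_X', coeff_mul_X', coeff_one] at h
    have hone' : (if (0 : Fin 3 →₀ ℕ) = n then (1:ℝ) else 0) = 0 := if_neg (fun h' => hn h'.symm)
    rw [hone', ← he0, ← he1] at h
    linarith [h]
  have hsub0 : ∀ n : Fin 3 →₀ ℕ, (n - e0) 0 = n 0 - 1 ∧ (n - e0) 1 = n 1 ∧ (n - e0) 2 = n 2 := by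
    intro n
    refine ⟨?_, ?_, ?_⟩ <;> (rw [Finsupp.tsub_apply, he0, Finsupp.single_apply]; simp)
  have hsub1 : ∀ n : Fin 3 →₀ ℕ, (n - e1) 0 = n 0 ∧ (n - e1) 1 = n 1 - 1 ∧ (n - e1) 2 = n 2 := by
    intro n
    refine ⟨?_, ?_, ?_⟩ <;> (rw [Finsupp.tsub_apply, he1, Finsupp.single_apply]; simp)
  -- propagation downwards
  have hprop : ∀ n ∈ b.support, n ≠ 0 →
      ∃ n' ∈ b.support, n' 0 + n' 1 + n' 2 + 1 = n 0 + n 1 + n 2 := by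
    intro n hn hn0
    have hcb : 0 < coeff n b := lt_of_le_of_ne (hb_nonneg n) (Ne.symm (mem_support_iff.mp hn))
    have h := hrec n hn0
    have hca := ha_nonneg n
    by_cases h0 : (if 0 ∈ n.support then coeff (n - e0) b else 0) ≠ 0
    · rw [ne_eq, ite_eq_right_iff, not_forall] at h0
      obtain ⟨hmem, hne⟩ := h0
      refine ⟨n - e0, mem_support_iff.mpr hne, ?_⟩
      have hn0' : n 0 ≠ 0 := Finsupp.mem_support_iff.mp hmem
      obtain ⟨hs0, hs1, hs2⟩ := hsub0 n
      rw [hs0, hs1, hs2]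
      omega
    · by_cases h1 : (if 1 ∈ n.support then coeff (n - e1) b else 0) ≠ 0
      · rw [ne_eq, ite_eq_right_iff, not_forall] at h1
        obtain ⟨hmem, hne⟩ := h1
        refine ⟨n - e1, mem_support_iff.mpr hne, ?_⟩
        have hn1' : n 1 ≠ 0 := Finsupp.mem_support_iff.mp hmem
        obtain ⟨hs0, hs1, hs2⟩ := hsub1 n
        rw [hs0, hs1, hs2]
        omega
      · push_neg at h0 h1
        rw [h0, h1] at h
        linarith
  -- top-degree extraction
  have htop : ∀ m : Fin 3 →₀ ℕ, m ∈ p.support → m 2 = 0 → m 0 + m 1 = d →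
      ∃ n ∈ b.support, n 0 + n 1 + n 2 = d - 1 ∧ (n 0 = m 0 ∨ n 0 + 1 = m 0) := by
    intro m hm hm2 hmd
    have hmb : coeff m b = 0 := by
      by_contra h
      have := hbdeg m (mem_support_iff.mpr h)
      omega
    have hma : coeff m a = coeff m p := ha_coeff m hm2
    have hcp : 0 < coeff m p := lt_of_le_of_ne (hnonneg m) (Ne.symm (mem_support_iff.mp hm))
    have hmne : m ≠ 0 := by
      intro h
      rw [h] at hmd
      simp at hmd
      omega
    have h := hrec m hmne
    rw [hma, hmb, add_zero] at h
    by_cases h0 : (if 0 ∈ m.support then coeff (m - e0) b else 0) ≠ 0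
    · rw [ne_eq, ite_eq_right_iff, not_forall] at h0
      obtain ⟨hmem, hne⟩ := h0
      have hm0' : m 0 ≠ 0 := Finsupp.mem_support_iff.mp hmem
      obtain ⟨hs0, hs1, hs2⟩ := hsub0 m
      refine ⟨m - e0, mem_support_iff.mpr hne, ?_, ?_⟩
      · rw [hs0, hs1, hs2]
        omega
      · right
        rw [hs0]
        omega
    · by_cases h1 : (if 1 ∈ m.support then coeff (m - e1) b else 0) ≠ 0
      · rw [ne_eq, ite_eq_right_iff, not_forall] at h1
        obtain ⟨hmem, hne⟩ := h1
        have hm1' : m 1 ≠ 0 := Finsupp.mem_support_iff.mp hmem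
        obtain ⟨hs0, hs1, hs2⟩ := hsub1 m
        refine ⟨m - e1, mem_support_iff.mpr hne, ?_, ?_⟩
        · rw [hs0, hs1, hs2]
          omega
        · left
          rw [hs0]
      · push_neg at h0 h1
        rw [h0, h1] at h
        linarith
  obtain ⟨n₁, hn₁b, hn₁d, hn₁0⟩ := htop m₁ hm₁ hm₁z (by omega)
  obtain ⟨n₂, hn₂b, hn₂d, hn₂0⟩ := htop m₂ hm₂ hm₂z (by omega)
  have hn₁₂ : n₁ ≠ n₂ := by
    intro h
    rw [h] at hn₁0
    omega
  have hchain : ∀ j : ℕ, (∃ n ∈ b.support, n 0 + n 1 + n 2 = j) →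
      ∀ k, k ≤ j → ∃ n ∈ b.support, n 0 + n 1 + n 2 = k := by
    intro j
    induction j with
    | zero =>
      intro hex k hk
      rw [Nat.le_zero.mp hk]
      exact hex
    | succ j ih =>
      intro hex k hk
      rcases Nat.lt_or_ge k (j+1) with hlt | hge
      · obtain ⟨n, hnb, hnd⟩ := hex
        have hnne : n ≠ 0 := by
          intro h
          rw [h] at hnd
          have : (0 : Fin 3 →₀ ℕ) 0 + (0 : Fin 3 →₀ ℕ) 1 + (0 : Fin 3 →₀ ℕ) 2 = 0 := rfl
          omega
        obtain ⟨n', hn'b, hn'd⟩ := hprop n hnb hnne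
        exact ih ⟨n', hn'b, by omega⟩ k (by omega)
      · have : k = j + 1 := by omega
        rw [this]
        exact hex
  have hTS : b.support.card ≤ (p.support.filter fun m => m 2 ≠ 0).card := by
    apply Finset.card_le_card_of_injOn (fun n => n + e2)
    · intro n hn
      rw [Finset.mem_coe, Finset.mem_filter]
      constructor
      · rw [mem_support_iff, ← hb_coeff n (hb_supp2 n hn)]
        exact mem_support_iff.mp hn
      · rw [Finsupp.add_apply, hb_supp2 n hn, he2, Finsupp.single_apply]
        simp
    · intro x _ y _ h
      exact add_right_cancel h
  refine le_trans ?_ hTS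
  have hfiber : ∀ n ∈ b.support, (n 0 + n 1 + n 2) ∈ Finset.range d := by
    intro n hn
    rw [Finset.mem_range]
    have := hbdeg n hn
    omega
  rw [Finset.card_eq_sum_card_fiberwise hfiber]
  have hlower : ∀ k ∈ Finset.range d,
      (if k = d - 1 then 2 else 1) ≤ (b.support.filter fun n => n 0 + n 1 + n 2 = k).card := by
    intro k hk
    rw [Finset.mem_range] at hk
    split_ifs with h
    · apply Finset.one_lt_card.mpr
      refine ⟨n₁, ?_, n₂, ?_, hn₁₂⟩ <;> rw [Finset.mem_filter]
      · exact ⟨hn₁b, by omega⟩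
      · exact ⟨hn₂b, by omega⟩
    · obtain ⟨n, hnb, hnd⟩ := hchain (d - 1) ⟨n₁, hn₁b, hn₁d⟩ k (by omega)
      apply Finset.card_pos.mpr
      exact ⟨n, Finset.mem_filter.mpr ⟨hnb, by omega⟩⟩
  calc d + 1 = ∑ k ∈ Finset.range d, (if k = d - 1 then 2 else 1) := by
        have hsplit : ∀ k, (if k = d - 1 then 2 else 1) = 1 + (if k = d - 1 then 1 else 0) := by
          intro k; split_ifs <;> rfl
        simp_rw [hsplit]
        rw [Finset.sum_add_distrib, Finset.sum_const, Finset.sum_ite_eq' (Finset.range d) (d-1)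
          (fun _ => 1), if_pos (Finset.mem_range.mpr (by omega))]
        simp
    _ ≤ _ := Finset.sum_le_sum hlower
end
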